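/- arXiv:1609.01120 — 6 statements merged into one kernel-verified Lean document; each statement's English description precedes it below -/
import Mathlib

section
/- Let 𝔽_q be a finite field of odd characteristic with nontrivial additive character χ₁, quadratic character η, and Gaussian sum g(q). Let B be a symmetric n×n matrix over 𝔽_q of rank r, and let B_r be any nonzero principal r×r minor of B (which exists since B is symmetric of rank r). Then Σ_{x ∈ 𝔽_q^n} χ₁(xᵀ B x) = q^n · η(det B_r) · (g(q)/q)^r. -/
open Matrix

section AuxGauss
open Finset
set_option linter.unusedSectionVars false

variable {F : Type} [Field F] [Fintype F] [DecidableEq F]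

lemma gauss_scalar (hF : ringChar F ≠ 2) (χ₁ : AddChar F ℂ) (hχ : ∃ x : F, χ₁ x ≠ 1)
    {a : F} (ha : a ≠ 0) :
    ∑ t : F, χ₁ (a * t ^ 2) =
      ((quadraticChar F a : ℤ) : ℂ) * ∑ x : F, ((quadraticChar F x : ℤ) : ℂ) * χ₁ x := by
  have h1 : ∑ t : F, χ₁ (a * t ^ 2)
      = ∑ u : F, (((quadraticChar F u : ℤ) : ℂ) + 1) * χ₁ (a * u) := by
    rw [← Finset.sum_fiberwise Finset.univ (fun t : F => t ^ 2) (fun t => χ₁ (a * t ^ 2))]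
    refine Finset.sum_congr rfl fun u _ => ?_
    have : ∑ t ∈ Finset.univ.filter (fun t : F => t ^ 2 = u), χ₁ (a * t ^ 2)
        = ∑ t ∈ Finset.univ.filter (fun t : F => t ^ 2 = u), χ₁ (a * u) := by
      refine Finset.sum_congr rfl fun t ht => ?_
      rw [(Finset.mem_filter.mp ht).2]
    rw [this, Finset.sum_const, nsmul_eq_mul]
    congr 1
    have hc := quadraticChar_card_sqrts hF u
    have : ((Finset.univ.filter (fun t : F => t ^ 2 = u)).card : ℤ)
        = quadraticChar F u + 1 := by
      rw [← hc]; congr 1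
      · congr 1; ext t; simp
    have := congrArg (fun z : ℤ => (z : ℂ)) this
    push_cast at this ⊢
    exact this
  rw [h1]
  have h2 : ∀ u : F, (((quadraticChar F u : ℤ) : ℂ) + 1) * χ₁ (a * u)
      = ((quadraticChar F u : ℤ) : ℂ) * χ₁ (a * u) + χ₁ (a * u) := fun u => by ring
  simp_rw [h2, Finset.sum_add_distrib]
  -- second sum is zero
  have hz : ∑ u : F, χ₁ (a * u) = 0 := by
    have : ∑ u : F, χ₁ (a * u) = ∑ u : F, (χ₁.mulShift a) u := by
      simp [AddChar.mulShift_apply]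
    rw [this, AddChar.sum_eq_zero_iff_ne_zero.mpr]
    rw [AddChar.ne_zero_iff]
    obtain ⟨x, hx⟩ := hχ
    exact ⟨a⁻¹ * x, by rwa [AddChar.mulShift_apply, ← mul_assoc, mul_inv_cancel₀ ha, one_mul]⟩
  rw [hz, add_zero]
  -- substitution u ↦ a⁻¹ * v
  rw [Finset.mul_sum]
  refine Fintype.sum_equiv (Equiv.mulLeft₀ a ha) _ _ fun u => ?_
  simp only [Equiv.mulLeft₀_apply]
  have hmul : (quadraticChar F (a * u) : ℤ) = (quadraticChar F a : ℤ) * (quadraticChar F u : ℤ) := by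
    exact_mod_cast map_mul (quadraticChar F) a u
  have hsq : (quadraticChar F a : ℤ) * (quadraticChar F a : ℤ) = 1 := by
    rw [← sq]; exact quadraticChar_sq_one ha
  calc ((quadraticChar F u : ℤ) : ℂ) * χ₁ (a * u)
      = (((quadraticChar F a * quadraticChar F a : ℤ)) : ℂ) * ((quadraticChar F u : ℤ) : ℂ) * χ₁ (a * u) := by
        rw [hsq]; push_cast; ring
    _ = ((quadraticChar F a : ℤ) : ℂ) * (((quadraticChar F (a * u) : ℤ) : ℂ) * χ₁ (a * u)) := by
        rw [hmul]; push_cast; ring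

lemma addChar_map_sum {ι : Type*} (χ₁ : AddChar F ℂ) (s : Finset ι) (f : ι → F) :
    χ₁ (∑ i ∈ s, f i) = ∏ i ∈ s, χ₁ (f i) := by
  classical
  induction s using Finset.induction_on with
  | empty => simp
  | insert _ _ h ih => rw [Finset.sum_insert h, Finset.prod_insert h, AddChar.map_add_eq_mul, ih]

lemma sum_diagonal_eq {ι : Type*} [Fintype ι] [DecidableEq ι] (χ₁ : AddChar F ℂ) (d : ι → F) :
    ∑ x : ι → F, χ₁ (x ⬝ᵥ (Matrix.diagonal d) *ᵥ x) = ∏ i, ∑ t : F, χ₁ (d i * t ^ 2) := by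
  have key : ∀ x : ι → F, x ⬝ᵥ (Matrix.diagonal d) *ᵥ x = ∑ i, d i * (x i) ^ 2 := by
    intro x
    simp [dotProduct, Matrix.mulVec_diagonal]
    exact Finset.sum_congr rfl fun i _ => by ring
  simp_rw [key, addChar_map_sum]
  rw [Finset.prod_univ_sum (fun _ => (Finset.univ : Finset F)) (fun i t => χ₁ (d i * t ^ 2))]
  rw [Fintype.piFinset_univ]

lemma sum_congruence {ι : Type*} [Fintype ι] [DecidableEq ι] (χ₁ : AddChar F ℂ)
    (M P : Matrix ι ι F) (hP : IsUnit P.det) :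
    ∑ x : ι → F, χ₁ (x ⬝ᵥ M *ᵥ x) = ∑ y : ι → F, χ₁ (y ⬝ᵥ (Pᵀ * M * P) *ᵥ y) := by
  have hbij : Function.Bijective (fun y : ι → F => P *ᵥ y) := by
    have := P.invertibleOfIsUnitDet hP
    exact ⟨Matrix.mulVec_injective_of_invertible P, Matrix.mulVec_surjective_of_invertible P⟩
  refine (Fintype.sum_bijective _ hbij _ _ fun y => ?_).symm
  congr 1
  symm
  calc (P *ᵥ y) ⬝ᵥ M *ᵥ (P *ᵥ y)
      = (y ᵥ* Pᵀ) ⬝ᵥ (M * P) *ᵥ y := by rw [Matrix.vecMul_transpose, Matrix.mulVec_mulVec]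
    _ = y ⬝ᵥ (Pᵀ * (M * P)) *ᵥ y := by
        rw [Matrix.dotProduct_mulVec, Matrix.vecMul_vecMul, ← Matrix.dotProduct_mulVec]
    _ = y ⬝ᵥ (Pᵀ * M * P) *ᵥ y := by rw [mul_assoc]

lemma symm_congruent_diagonal (hF : ringChar F ≠ 2) {ι : Type} [Fintype ι] [DecidableEq ι]
    (A : Matrix ι ι F) (hA : A.IsSymm) :
    ∃ P : Matrix ι ι F, IsUnit P.det ∧ Pᵀ * A * P = Matrix.diagonal (fun i => (Pᵀ * A * P) i i) := by
  haveI : Invertible (2 : F) := invertibleOfNonzero (Ring.two_ne_zero hF)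
  set φ : LinearMap.BilinForm F (ι → F) := Matrix.toLinearMap₂' F A with hφ
  have hsymm : LinearMap.IsSymm φ := by
    rw [LinearMap.isSymm_def]; intro x y
    simp only [RingHom.id_apply, hφ, Matrix.toLinearMap₂'_apply']
    calc x ⬝ᵥ A *ᵥ y = (x ᵥ* A) ⬝ᵥ y := by rw [Matrix.dotProduct_mulVec]
      _ = (A *ᵥ x) ⬝ᵥ y := by rw [← hA.eq, Matrix.vecMul_transpose, hA.eq]
      _ = y ⬝ᵥ A *ᵥ x := dotProduct_comm _ _
  obtain ⟨v, hv⟩ := LinearMap.BilinForm.exists_orthogonal_basis hsymm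
  have hfr : Module.finrank F (ι → F) = Fintype.card ι := Module.finrank_pi F
  let e : Fin (Module.finrank F (ι → F)) ≃ ι :=
    (finCongr hfr).trans (Fintype.equivFin ι).symm
  let w : Module.Basis ι F (ι → F) := v.reindex e
  have hw : ∀ i j : ι, i ≠ j → φ (w i) (w j) = 0 := by
    intro i j hij
    have : e.symm i ≠ e.symm j := fun h => hij (by simpa using congrArg e h)
    simpa [w, Module.Basis.reindex_apply] using hv this
  set P : Matrix ι ι F := (Pi.basisFun F ι).toMatrix w with hP
  haveI : Invertible P := (Pi.basisFun F ι).invertibleToMatrix w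
  refine ⟨P, P.isUnit_det_of_invertible, ?_⟩
  have hPapp : ∀ k i, P k i = w i k := by
    intro k i
    rw [hP, Module.Basis.toMatrix_apply, Pi.basisFun_repr]
  have hentry : ∀ i j, (Pᵀ * A * P) i j = φ (w i) (w j) := by
    intro i j
    rw [hφ, Matrix.toLinearMap₂'_apply']
    rw [Matrix.mul_assoc, Matrix.mul_apply, dotProduct]
    refine Finset.sum_congr rfl fun k _ => ?_
    rw [Matrix.transpose_apply, hPapp k i]
    congr 1
  ext i j
  by_cases hij : i = j
  · subst hij; simp [Matrix.diagonal_apply_eq]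
  · rw [Matrix.diagonal_apply_ne _ hij, hentry i j, hw i j hij]

lemma sum_nondegenerate (hF : ringChar F ≠ 2) (χ₁ : AddChar F ℂ) (hχ : ∃ x : F, χ₁ x ≠ 1)
    {ι : Type} [Fintype ι] [DecidableEq ι] (A : Matrix ι ι F) (hA : A.IsSymm)
    (hdet : A.det ≠ 0) :
    ∑ x : ι → F, χ₁ (x ⬝ᵥ A *ᵥ x) =
      ((quadraticChar F A.det : ℤ) : ℂ) *
        (∑ x : F, ((quadraticChar F x : ℤ) : ℂ) * χ₁ x) ^ (Fintype.card ι) := by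
  obtain ⟨P, hPu, hdiag⟩ := symm_congruent_diagonal hF A hA
  set d : ι → F := fun i => (Pᵀ * A * P) i i with hd
  have hdetd : ∏ i, d i = P.det * P.det * A.det := by
    have : (Matrix.diagonal d).det = (Pᵀ * A * P).det := by rw [hdiag]
    rw [Matrix.det_diagonal] at this
    rw [this, Matrix.det_mul, Matrix.det_mul, Matrix.det_transpose]; ring
  have hPd : P.det ≠ 0 := hPu.ne_zero
  have hprodne : (∏ i, d i) ≠ 0 := by
    rw [hdetd]; exact mul_ne_zero (mul_ne_zero hPd hPd) hdet
  have hdne : ∀ i, d i ≠ 0 := fun i =>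
    Finset.prod_ne_zero_iff.mp hprodne i (Finset.mem_univ i)
  rw [sum_congruence χ₁ A P hPu, hdiag, sum_diagonal_eq]
  have hterm : ∀ i : ι, ∑ t : F, χ₁ (d i * t ^ 2)
      = ((quadraticChar F (d i) : ℤ) : ℂ) * ∑ x : F, ((quadraticChar F x : ℤ) : ℂ) * χ₁ x :=
    fun i => gauss_scalar hF χ₁ hχ (hdne i)
  simp_rw [hterm]
  rw [Finset.prod_mul_distrib, Finset.prod_const, Finset.card_univ]
  congr 1
  have hmap : ∏ i, (quadraticChar F (d i)) = quadraticChar F (∏ i, d i) :=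
    (map_prod (quadraticChar F) d Finset.univ).symm
  have : ∏ i, ((quadraticChar F (d i) : ℤ) : ℂ) = ((quadraticChar F (∏ i, d i) : ℤ) : ℂ) := by
    rw [← hmap]; push_cast; rfl
  rw [this, hdetd, _root_.map_mul (quadraticChar F), _root_.map_mul (quadraticChar F)]
  have hsq : quadraticChar F P.det * quadraticChar F P.det = 1 := by
    rw [← sq]; exact quadraticChar_sq_one hPd
  rw [hsq, one_mul]

lemma schur_zero {α β : Type} [Fintype α] [Fintype β] [DecidableEq α] [DecidableEq β]
    (A : Matrix α α F) (W : Matrix β β F) (hA : IsUnit A.det)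
    (hrank : (Matrix.fromBlocks A 0 0 W).rank = Fintype.card α) : W = 0 := by
  set N : Matrix (α ⊕ β) (α ⊕ β) F := Matrix.fromBlocks A 0 0 W with hN
  have hrk : Module.finrank F (LinearMap.range N.mulVecLin) = Fintype.card α := hrank
  have hrn := LinearMap.finrank_range_add_finrank_ker N.mulVecLin
  rw [hrk, Module.finrank_pi, Fintype.card_sum] at hrn
  have hker : Module.finrank F (LinearMap.ker N.mulVecLin) = Fintype.card β := by omega
  haveI : Invertible A := A.invertibleOfIsUnitDet hA
  -- the projection to the β-coordinates, restricted to the kernel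
  set φ : LinearMap.ker N.mulVecLin →ₗ[F] (β → F) :=
    (LinearMap.funLeft F F Sum.inr).comp (LinearMap.ker N.mulVecLin).subtype with hφ
  have hblock : ∀ x : α ⊕ β → F, N *ᵥ x =
      Sum.elim (A *ᵥ (x ∘ Sum.inl)) (W *ᵥ (x ∘ Sum.inr)) := by
    intro x
    rw [hN, Matrix.fromBlocks_mulVec]
    simp [Matrix.zero_mulVec]
  have hinj : Function.Injective φ := by
    rw [← LinearMap.ker_eq_bot]
    rw [LinearMap.ker_eq_bot']
    rintro ⟨x, hx⟩ hφx
    have hxr : x ∘ Sum.inr = 0 := hφx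
    have hNx : N *ᵥ x = 0 := hx
    rw [hblock x] at hNx
    have hAx : A *ᵥ (x ∘ Sum.inl) = 0 := by
      funext i; exact congrFun hNx (Sum.inl i)
    have hxl : x ∘ Sum.inl = 0 := by
      apply Matrix.mulVec_injective_of_invertible A (a₁ := x ∘ Sum.inl) (a₂ := 0)
      rw [hAx, Matrix.mulVec_zero]
    ext s
    cases s with
    | inl i => exact congrFun hxl i
    | inr j => exact congrFun hxr j
  have hsurj : Function.Surjective φ := by
    have heq : Module.finrank F (LinearMap.ker N.mulVecLin)
        = Module.finrank F (β → F) := by rw [hker, Module.finrank_pi]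
    exact (LinearMap.injective_iff_surjective_of_finrank_eq_finrank heq).mp hinj
  have hW : ∀ v : β → F, W *ᵥ v = 0 := by
    intro v
    obtain ⟨⟨x, hx⟩, hxv⟩ := hsurj v
    have hNx : N *ᵥ x = 0 := hx
    rw [hblock x] at hNx
    have hxr : x ∘ Sum.inr = v := hxv
    funext j
    have := congrFun hNx (Sum.inr j)
    simpa [hxr] using this
  ext i j
  have := congrFun (hW (Pi.single j 1)) i
  rw [Matrix.mulVec_single] at this
  simpa using this

end AuxGauss

/-- Multidimensional Gaussian sums over a finite field of odd characteristic:
if `B` is a symmetric `n × n` matrix of rank `r` over `𝔽_q` and `B_S` is a nonzero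
principal `r × r` submatrix, then
`∑_{x ∈ 𝔽_q^n} χ₁(xᵀ B x) = q^n · η(det B_S) · (g(q)/q)^r`. -/
theorem sum_addChar_quadratic_form {F : Type} [Field F] [Fintype F] [DecidableEq F]
    (hF : ringChar F ≠ 2) (χ₁ : AddChar F ℂ) (hχ : ∃ x : F, χ₁ x ≠ 1)
    {n : ℕ} (B : Matrix (Fin n) (Fin n) F) (hB : B.IsSymm)
    (S : Finset (Fin n)) (hcard : S.card = B.rank)
    (hS : (B.submatrix (fun a : {x // x ∈ S} => (a : Fin n))
        (fun a : {x // x ∈ S} => (a : Fin n))).det ≠ 0) :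
    ∑ x : Fin n → F, χ₁ (x ⬝ᵥ B.mulVec x) =
      (Fintype.card F : ℂ) ^ n *
        ((quadraticChar F ((B.submatrix (fun a : {x // x ∈ S} => (a : Fin n))
            (fun a : {x // x ∈ S} => (a : Fin n))).det) : ℤ) : ℂ) *
        ((∑ x : F, ((quadraticChar F x : ℤ) : ℂ) * χ₁ x) / (Fintype.card F : ℂ)) ^ B.rank := by
  classical
  set A : Matrix {x // x ∈ S} {x // x ∈ S} F :=
    B.submatrix (fun a : {x // x ∈ S} => (a : Fin n)) (fun a : {x // x ∈ S} => (a : Fin n)) with hAdef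
  set e : {x // x ∈ S} ⊕ {x // x ∉ S} ≃ Fin n := Equiv.sumCompl (· ∈ S) with he
  set M : Matrix ({x // x ∈ S} ⊕ {x // x ∉ S}) ({x // x ∈ S} ⊕ {x // x ∉ S}) F :=
    B.submatrix e e with hM
  have hAunit : IsUnit A.det := isUnit_iff_ne_zero.mpr hS
  have hMsymm : M.IsSymm := by
    rw [hM, Matrix.IsSymm, Matrix.transpose_submatrix, hB.eq]
  have hAsymm : A.IsSymm := by
    rw [hAdef, Matrix.IsSymm, Matrix.transpose_submatrix, hB.eq]
  have hA11 : M.toBlocks₁₁ = A := rfl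
  set C : Matrix {x // x ∈ S} {x // x ∉ S} F := M.toBlocks₁₂ with hC
  set D : Matrix {x // x ∉ S} {x // x ∉ S} F := M.toBlocks₂₂ with hD
  have h21 : M.toBlocks₂₁ = Cᵀ := by
    ext i j
    have := congrFun (congrFun hMsymm.eq (Sum.inr i)) (Sum.inl j)
    simpa [hC, Matrix.toBlocks₂₁, Matrix.toBlocks₁₂, Matrix.transpose_apply] using this.symm
  have hMblocks : M = Matrix.fromBlocks A C Cᵀ D := by
    rw [← hA11, ← h21, hC, hD, Matrix.fromBlocks_toBlocks]
  -- invertibility facts for A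
  have hAinv : A * A⁻¹ = 1 := Matrix.mul_nonsing_inv A hAunit
  have hAinvT : A⁻¹ᵀ = A⁻¹ := by rw [Matrix.transpose_nonsing_inv, hAsymm.eq]
  set P₀ : Matrix ({x // x ∈ S} ⊕ {x // x ∉ S}) ({x // x ∈ S} ⊕ {x // x ∉ S}) F :=
    Matrix.fromBlocks 1 (-(A⁻¹ * C)) 0 1 with hP₀
  have hP₀det : IsUnit P₀.det := by
    rw [hP₀, Matrix.det_fromBlocks_zero₂₁, Matrix.det_one, Matrix.det_one, one_mul]
    exact isUnit_one
  set W : Matrix {x // x ∉ S} {x // x ∉ S} F := D - Cᵀ * (A⁻¹ * C) with hW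
  have hT : P₀ᵀ = Matrix.fromBlocks 1 0 (-(A⁻¹ * C))ᵀ 1 := by
    rw [hP₀, Matrix.fromBlocks_transpose, Matrix.transpose_one, Matrix.transpose_zero,
      Matrix.transpose_one]
  have e11 : (1 : Matrix {x // x ∈ S} {x // x ∈ S} F) * A
      + (0 : Matrix {x // x ∈ S} {x // x ∉ S} F) * Cᵀ = A := by
    rw [Matrix.one_mul, Matrix.zero_mul, add_zero]
  have e12 : (1 : Matrix {x // x ∈ S} {x // x ∈ S} F) * C
      + (0 : Matrix {x // x ∈ S} {x // x ∉ S} F) * D = C := by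
    rw [Matrix.one_mul, Matrix.zero_mul, add_zero]
  have e21 : (-(A⁻¹ * C))ᵀ * A + (1 : Matrix {x // x ∉ S} {x // x ∉ S} F) * Cᵀ = 0 := by
    rw [Matrix.transpose_neg, Matrix.transpose_mul, hAinvT, Matrix.one_mul, Matrix.neg_mul,
      Matrix.mul_assoc, Matrix.nonsing_inv_mul A hAunit, Matrix.mul_one, neg_add_cancel]
  have hQ : P₀ᵀ * M = Matrix.fromBlocks A C 0 ((-(A⁻¹ * C))ᵀ * C + 1 * D) := by
    rw [hT, hMblocks, Matrix.fromBlocks_multiply, e11, e12, e21]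
  have f11 : A * (1 : Matrix {x // x ∈ S} {x // x ∈ S} F)
      + C * (0 : Matrix {x // x ∉ S} {x // x ∈ S} F) = A := by
    rw [Matrix.mul_one, Matrix.mul_zero, add_zero]
  have f12 : A * (-(A⁻¹ * C)) + C * (1 : Matrix {x // x ∉ S} {x // x ∉ S} F) = 0 := by
    rw [Matrix.mul_neg, ← Matrix.mul_assoc, hAinv, Matrix.one_mul, Matrix.mul_one,
      neg_add_cancel]
  have f21 : (0 : Matrix {x // x ∉ S} {x // x ∈ S} F) * (1 : Matrix {x // x ∈ S} {x // x ∈ S} F)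
      + ((-(A⁻¹ * C))ᵀ * C + 1 * D) * (0 : Matrix {x // x ∉ S} {x // x ∈ S} F) = 0 := by
    rw [Matrix.mul_zero, Matrix.zero_mul, add_zero]
  have f22 : (0 : Matrix {x // x ∉ S} {x // x ∈ S} F) * (-(A⁻¹ * C))
      + ((-(A⁻¹ * C))ᵀ * C + 1 * D) * (1 : Matrix {x // x ∉ S} {x // x ∉ S} F) = W := by
    rw [Matrix.zero_mul, Matrix.mul_one, zero_add, Matrix.transpose_neg, Matrix.transpose_mul,
      hAinvT, Matrix.one_mul, Matrix.neg_mul, Matrix.mul_assoc, hW, neg_add_eq_sub]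
  have hkey : P₀ᵀ * M * P₀ = Matrix.fromBlocks A 0 0 W := by
    rw [hQ, hP₀, Matrix.fromBlocks_multiply, f11, f12, f21, f22]
  have hrankM : M.rank = Fintype.card {x // x ∈ S} := by
    rw [hM, Matrix.rank_submatrix, Fintype.card_coe, hcard]
  have hrankN : (Matrix.fromBlocks A 0 0 W).rank = Fintype.card {x // x ∈ S} := by
    rw [← hkey,
      Matrix.rank_mul_eq_left_of_isUnit_det P₀ (P₀ᵀ * M) hP₀det,
      Matrix.rank_mul_eq_right_of_isUnit_det P₀ᵀ M
        (by rw [Matrix.det_transpose]; exact hP₀det)]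
    exact hrankM
  have hW0 : W = 0 := schur_zero A W hAunit hrankN
  -- reindex the sum
  have hsum1 : ∑ x : Fin n → F, χ₁ (x ⬝ᵥ B.mulVec x)
      = ∑ y : {x // x ∈ S} ⊕ {x // x ∉ S} → F, χ₁ (y ⬝ᵥ M *ᵥ y) := by
    refine (Fintype.sum_bijective (fun y : {x // x ∈ S} ⊕ {x // x ∉ S} → F => y ∘ e.symm)
      (e.arrowCongr (Equiv.refl F)).bijective _ _ fun y => ?_).symm
    congr 1
    have : y ⬝ᵥ M *ᵥ y = (y ∘ e.symm) ⬝ᵥ (B *ᵥ (y ∘ e.symm)) := by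
      rw [hM, Matrix.submatrix_mulVec_equiv]
      exact Fintype.sum_equiv e _ _ fun s => by simp [Function.comp]
    rw [this]
  have hsum2 : ∑ y : {x // x ∈ S} ⊕ {x // x ∉ S} → F, χ₁ (y ⬝ᵥ M *ᵥ y)
      = ∑ z : {x // x ∈ S} ⊕ {x // x ∉ S} → F,
          χ₁ (z ⬝ᵥ (Matrix.fromBlocks A 0 0 (0 : Matrix {x // x ∉ S} {x // x ∉ S} F)) *ᵥ z) := by
    rw [sum_congruence χ₁ M P₀ hP₀det, hkey, hW0]
  have hval : ∀ z : {x // x ∈ S} ⊕ {x // x ∉ S} → F,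
      z ⬝ᵥ (Matrix.fromBlocks A 0 0 (0 : Matrix {x // x ∉ S} {x // x ∉ S} F)) *ᵥ z
        = (z ∘ Sum.inl) ⬝ᵥ A *ᵥ (z ∘ Sum.inl) := by
    intro z
    rw [Matrix.fromBlocks_mulVec, Matrix.zero_mulVec, Matrix.zero_mulVec, Matrix.zero_mulVec,
      add_zero, add_zero]
    rw [dotProduct, Fintype.sum_sum_type]
    simp [dotProduct]
  have hsplit : ∑ z : {x // x ∈ S} ⊕ {x // x ∉ S} → F,
      χ₁ (z ⬝ᵥ (Matrix.fromBlocks A 0 0 (0 : Matrix {x // x ∉ S} {x // x ∉ S} F)) *ᵥ z)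
        = (∑ u : {x // x ∈ S} → F, χ₁ (u ⬝ᵥ A *ᵥ u))
            * (Fintype.card F : ℂ) ^ (Fintype.card {x // x ∉ S}) := by
    simp_rw [hval]
    refine (Fintype.sum_equiv (Equiv.sumArrowEquivProdArrow {x // x ∈ S} {x // x ∉ S} F)
      (fun z : {x // x ∈ S} ⊕ {x // x ∉ S} → F => χ₁ ((z ∘ Sum.inl) ⬝ᵥ A *ᵥ (z ∘ Sum.inl)))
      (fun p : ({x // x ∈ S} → F) × ({x // x ∉ S} → F) => χ₁ (p.1 ⬝ᵥ A *ᵥ p.1))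
      (fun z => rfl)).trans ?_
    rw [Fintype.sum_prod_type]
    simp_rw [Finset.sum_const, Finset.card_univ, nsmul_eq_mul]
    rw [← Finset.mul_sum, mul_comm]
    congr 1
    rw [Fintype.card_fun]
    push_cast
    rfl
  have hnd := sum_nondegenerate hF χ₁ hχ A hAsymm hS
  -- put everything together
  have hr : B.rank = Fintype.card {x // x ∈ S} := by rw [← hcard, Fintype.card_coe]
  have hn : Fintype.card {x // x ∈ S} + Fintype.card {x // x ∉ S} = n := by
    rw [← Fintype.card_sum]
    simpa using Fintype.card_congr e
  have hq : (Fintype.card F : ℂ) ≠ 0 := Nat.cast_ne_zero.mpr Fintype.card_ne_zero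
  have hpow : (Fintype.card F : ℂ) ^ n
      = (Fintype.card F : ℂ) ^ (Fintype.card {x // x ∈ S})
        * (Fintype.card F : ℂ) ^ (Fintype.card {x // x ∉ S}) := by
    rw [← pow_add, hn]
  rw [hsum1, hsum2, hsplit, hnd, hr, hpow, div_pow]
  rw [mul_div_assoc', eq_div_iff (pow_ne_zero _ hq)]
  ring
end

section
/- (Weighted matrix-tree theorem) Let G be a connected finite loopless multigraph with weights α(e) in a commutative ring, and let L'(G,α) be the matrix obtained from the weighted Laplacian L(G,α) by deleting row i and column i for any fixed vertex i. Then det L'(G,α) = Σ_{T spanning tree of G} Π_{e ∈ E(T)} α(e). -/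
open Finset in
/-- `u` and `v` are connected by edges in `T` (for the multigraph with origin `i`, terminus `f`). -/
def Connects {V E : Type} (i f : E → V) (T : Finset E) (u v : V) : Prop :=
  Relation.ReflTransGen
    (fun a b => ∃ e ∈ T, (i e = a ∧ f e = b) ∨ (i e = b ∧ f e = a)) u v

/-- `T` is (the edge set of) a spanning tree: connected and with `|V| - 1` edges. -/
def IsSpanningTree {V E : Type} [Fintype V] (i f : E → V) (T : Finset E) : Prop :=
  (∀ u v : V, Connects i f T u v) ∧ T.card + 1 = Fintype.card V

/-- The spanning-tree generating polynomial `s(α, G)`. -/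
noncomputable def treeSum {V E R : Type} [Fintype V] [Fintype E] [DecidableEq E]
    [CommRing R] (i f : E → V) (α : E → R) : R :=
  ∑ T ∈ @Finset.filter _ (fun T => IsSpanningTree i f T) (Classical.decPred _) Finset.univ,
    ∏ e ∈ T, α e

/-- The weighted Laplacian matrix of the multigraph. -/
def Lap {V E R : Type} [Fintype E] [DecidableEq V] [CommRing R]
    (i f : E → V) (α : E → R) : Matrix V V R := fun k j =>
  if k = j then ∑ e ∈ Finset.univ.filter (fun e => i e = k ∨ f e = k), α e
  else - ∑ e ∈ Finset.univ.filter (fun e => (i e = k ∧ f e = j) ∨ (i e = j ∧ f e = k)), α e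

/-- The projection of a vertex of `G` to a vertex of the contracted graph `G/W`. -/
def proj {V : Type} [DecidableEq V] (W : Finset V) (v : V) : Option {v : V // v ∉ W} :=
  if h : v ∈ W then none else some ⟨v, h⟩

/-- `s(α, G/W)`: the spanning-tree generating polynomial of the contraction of `W` in `G`
(the contracted graph has vertex set `Option {v // v ∉ W}`, with `none` the contracted vertex,
and its edges are the edges of `G` not internal to `W`). -/
noncomputable def sContr {V E R : Type} [Fintype V] [Fintype E] [DecidableEq V] [DecidableEq E]
    [CommRing R] (i f : E → V) (W : Finset V) (α : E → R) : R :=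
  treeSum (fun e : {e : E // ¬(i e ∈ W ∧ f e ∈ W)} => proj W (i e.1))
    (fun e => proj W (f e.1)) (fun e => α e.1)

/-- The incidence sign `ε_{v,e}`, as an element of the coefficient ring. -/
def eps {V E R : Type} [DecidableEq V] [CommRing R] (i f : E → V) (v : V) (e : E) : R :=
  if i e = v then -1 else if f e = v then 1 else 0

/-- The number of nowhere-zero `F`-flows on the multigraph. -/
noncomputable def flowCount {V E : Type} [Fintype E] [DecidableEq V]
    (F : Type) [Field F] (i f : E → V) : ℕ :=
  Nat.card {k : E → F // (∀ e, k e ≠ 0) ∧ ∀ v : V, ∑ e : E, eps i f v e * k e = 0}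

/-- The quadratic Gaussian sum `g(q)` of the finite field `F` (w.r.t. the additive
character `χ`); the quadratic character vanishes at `0`, so we may sum over all of `F`. -/
noncomputable def gSum (F : Type) [Field F] [Fintype F] [DecidableEq F]
    (χ : AddChar F ℂ) : ℂ :=
  ∑ x : F, ((quadraticChar F x : ℤ) : ℂ) * χ x


set_option linter.unusedSectionVars false
set_option linter.unusedVariables false
namespace MTT
open Finset

section Triangular
variable {R : Type} [CommRing R]

/-- Determinant of a matrix "triangular" with respect to a weight function. -/
theorem det_eq_prod_diag_of_weight {n : Type} [Fintype n] [DecidableEq n]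
    (M : Matrix n n R) (w : n → ℕ)
    (h : ∀ a b, M a b ≠ 0 → w b < w a ∨ b = a) :
    M.det = ∏ a, M a a := by
  have hbt : Matrix.BlockTriangular M.transpose w := by
    intro p q hpq
    by_contra hne
    rw [Matrix.transpose_apply] at hne
    rcases h q p hne with h1 | h1
    · omega
    · subst h1; exact lt_irrefl _ hpq
  rw [← Matrix.det_transpose, hbt.det]
  have hblock : ∀ a, (M.transpose.toSquareBlock w a).det
      = ∏ x ∈ univ.filter (fun x => w x = a), M x x := by
    intro a
    have hd : M.transpose.toSquareBlock w a
        = Matrix.diagonal (fun x : {x // w x = a} => M x.1 x.1) := by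
      ext p q
      by_cases hpq : p = q
      · subst hpq
        rw [Matrix.diagonal_apply_eq, Matrix.toSquareBlock_def]
        rfl
      · have hz : M q.1 p.1 = 0 := by
          by_contra hne
          rcases h q.1 p.1 hne with h1 | h1
          · rw [p.2, q.2] at h1; omega
          · exact hpq (Subtype.ext h1)
        rw [Matrix.diagonal_apply_ne _ hpq, Matrix.toSquareBlock_def]
        exact hz
    rw [hd, Matrix.det_diagonal]
    exact (Finset.prod_subtype (univ.filter (fun x => w x = a))
      (fun x => by simp) (fun x => M x x)).symm
  calc ∏ a ∈ univ.image w, (M.transpose.toSquareBlock w a).det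
      = ∏ a ∈ univ.image w, ∏ x ∈ univ.filter (fun x => w x = a), M x x :=
        Finset.prod_congr rfl (fun a _ => hblock a)
    _ = ∏ a, M a a :=
        Finset.prod_fiberwise_of_maps_to (fun x _ => mem_image_of_mem w (mem_univ x)) _

theorem det_eq_zero_of_row_sum_zero {n : Type} [Fintype n] [DecidableEq n] [Nonempty n]
    (M : Matrix n n R) (h : ∀ k, ∑ j, M k j = 0) : M.det = 0 := by
  obtain ⟨j₀⟩ := ‹Nonempty n›
  have hz := Matrix.det_updateRow_sum M.transpose j₀ (fun _ => 1)
  have hrow : (∑ k, (fun _ => (1:R)) k • M.transpose k) = (fun _ => (0:R)) := by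
    funext j
    rw [Finset.sum_apply]
    simpa using h j
  rw [hrow] at hz
  have : (M.transpose.updateRow j₀ fun _ => (0:R)).det = 0 :=
    Matrix.det_eq_zero_of_row_eq_zero j₀ (by simp)
  rw [this] at hz
  rw [← Matrix.det_transpose]
  simpa using hz.symm

end Triangular

section Graph
variable {V E R : Type} [Fintype V] [Fintype E] [DecidableEq V] [DecidableEq E] [CommRing R]

/-- The endpoint of `e` other than `v`. -/
def other (i f : E → V) (e : E) (v : V) : V := if i e = v then f e else i e

theorem other_ne {i f : E → V} {e : E} (hl : i e ≠ f e) (v : V) : other i f e v ≠ v := by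
  unfold other
  split_ifs with h
  · exact fun hc => hl (h.trans hc.symm)
  · exact h

theorem other_endpoint {i f : E → V} {e : E} {v u : V}
    (hv : i e = v ∨ f e = v) (hu : i e = u ∨ f e = u) :
    u = v ∨ u = other i f e v := by
  unfold other
  by_cases h : i e = v
  · rw [if_pos h]
    rcases hu with h1 | h1
    · exact Or.inl (h1 ▸ h)
    · exact Or.inr h1.symm
  · rw [if_neg h]
    rcases hv with h1 | h1
    · exact absurd h1 h
    · rcases hu with h2 | h2
      · exact Or.inr h2.symm
      · exact Or.inl (h2.symm.trans h1)

theorem other_other {i f : E → V} {e : E} {v : V} (hl : i e ≠ f e)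
    (hv : i e = v ∨ f e = v) : other i f e (other i f e v) = v := by
  unfold other
  by_cases h : i e = v
  · rw [if_pos h, if_neg hl]
    exact h
  · rcases hv with h1 | h1
    · exact absurd h1 h
    · rw [if_neg h, if_pos rfl]
      exact h1

theorem other_mem {i f : E → V} {e : E} {v : V} (hv : i e = v ∨ f e = v) :
    i e = other i f e v ∨ f e = other i f e v := by
  unfold other
  by_cases h : i e = v
  · rw [if_pos h]; exact Or.inr rfl
  · rw [if_neg h]; exact Or.inl rfl

theorem eps_ne_zero_imp {i f : E → V} {v : V} {e : E}
    (h : eps i f v e ≠ (0:R)) : i e = v ∨ f e = v := by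
  unfold eps at h
  by_cases h1 : i e = v
  · exact Or.inl h1
  · by_cases h2 : f e = v
    · exact Or.inr h2
    · rw [if_neg h1, if_neg h2] at h; exact absurd rfl h

theorem eps_eq_zero {i f : E → V} {v : V} {e : E}
    (h1 : i e ≠ v) (h2 : f e ≠ v) : eps i f v e = (0:R) := by
  unfold eps; rw [if_neg h1, if_neg h2]

theorem eps_i {i f : E → V} {v : V} {e : E} (h : i e = v) : eps i f v e = (-1:R) := by
  unfold eps; rw [if_pos h]

theorem eps_f {i f : E → V} {v : V} {e : E} (h1 : i e ≠ v) (h2 : f e = v) :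
    eps i f v e = (1:R) := by
  unfold eps; rw [if_neg h1, if_pos h2]

theorem eps_mul_self {i f : E → V} {v : V} {e : E}
    (hv : i e = v ∨ f e = v) : eps i f v e * eps i f v e = (1:R) := by
  unfold eps
  by_cases h : i e = v
  · rw [if_pos h]; ring
  · rcases hv with h1 | h1
    · exact absurd h1 h
    · rw [if_neg h, if_pos h1]; ring

theorem sum_eps {i f : E → V} {e : E} (hl : i e ≠ f e) :
    ∑ v : V, eps i f v e = (0:R) := by
  have he : ∀ v : V, eps i f v e
      = (if f e = v then (1:R) else 0) - (if i e = v then (1:R) else 0) := by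
    intro v
    unfold eps
    by_cases h1 : i e = v
    · have h2 : f e ≠ v := fun hc => hl (h1.trans hc.symm)
      simp only [if_pos h1, if_neg h2]; ring
    · by_cases h2 : f e = v
      · simp only [if_neg h1, if_pos h2]; ring
      · simp only [if_neg h1, if_neg h2]; ring
  rw [Finset.sum_congr rfl (fun v _ => he v), Finset.sum_sub_distrib,
    Finset.sum_ite_eq univ (f e) (fun _ => (1:R)), Finset.sum_ite_eq univ (i e) (fun _ => (1:R))]
  simp

theorem lap_apply (i f : E → V) (hl : ∀ e : E, i e ≠ f e) (α : E → R) (k j : V) :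
    Lap i f α k j = ∑ e, α e * eps i f k e * eps i f j e := by
  unfold Lap
  by_cases hkj : k = j
  · subst hkj
    rw [if_pos rfl, Finset.sum_filter]
    apply Finset.sum_congr rfl
    intro e _
    by_cases h1 : i e = k
    · rw [if_pos (Or.inl h1), eps_i h1]; ring
    · by_cases h2 : f e = k
      · rw [if_pos (Or.inr h2), eps_f h1 h2]; ring
      · rw [if_neg (fun hc => hc.elim h1 h2), eps_eq_zero h1 h2]; ring
  · rw [if_neg hkj]
    have he : ∀ e : E, α e * eps i f k e * eps i f j e
        = if (i e = k ∧ f e = j) ∨ (i e = j ∧ f e = k) then -α e else 0 := by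
      intro e
      by_cases h1 : i e = k
      · have h1' : i e ≠ j := fun hc => hkj (h1.symm.trans hc)
        by_cases h2 : f e = j
        · rw [if_pos (Or.inl ⟨h1, h2⟩), eps_i h1, eps_f h1' h2]; ring
        · have h2' : f e ≠ k := fun hc => (hl e) (h1.trans hc.symm)
          rw [if_neg (fun hc => hc.elim (fun h => h2 h.2) (fun h => h2' h.2)),
            eps_i h1, eps_eq_zero h1' h2]; ring
      · by_cases h2 : f e = k
        · have h2' : f e ≠ j := fun hc => hkj (h2.symm.trans hc)
          by_cases h3 : i e = j
          · rw [if_pos (Or.inr ⟨h3, h2⟩), eps_f h1 h2, eps_i h3]; ring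
          · rw [if_neg (fun hc => hc.elim (fun h => h1 h.1) (fun h => h3 h.1)),
              eps_f h1 h2, eps_eq_zero h3 h2']; ring
        · rw [if_neg (fun hc => hc.elim (fun h => h1 h.1) (fun h => h2 h.2)),
            eps_eq_zero h1 h2]; ring
    rw [Finset.sum_congr rfl (fun e _ => he e), Finset.sum_ite, Finset.sum_const_zero,
      add_zero, Finset.sum_neg_distrib]

variable (i f : E → V) (i₀ : V)

/-- One step toward the root along the orientation given by `φ`. -/
def stepF (φ : {v : V // v ≠ i₀} → E) (v : V) : V :=
  if h : v = i₀ then i₀ else other i f (φ ⟨v, h⟩) v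

/-- A "good" system of edges: injective, each vertex incident to its edge,
and iterating the step map reaches the root from everywhere. -/
def Good (φ : {v : V // v ≠ i₀} → E) : Prop :=
  Function.Injective φ ∧ (∀ k : {v : V // v ≠ i₀}, i (φ k) = k.1 ∨ f (φ k) = k.1) ∧
    ∀ v : V, ∃ n, (stepF i f i₀ φ)^[n] v = i₀

variable {i f i₀}

theorem stepF_i0 (φ : {v : V // v ≠ i₀} → E) : stepF i f i₀ φ i₀ = i₀ := dif_pos rfl

theorem stepF_ne (φ : {v : V // v ≠ i₀} → E) {v : V} (h : v ≠ i₀) :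
    stepF i f i₀ φ v = other i f (φ ⟨v, h⟩) v := dif_neg h

theorem iterate_i0 (φ : {v : V // v ≠ i₀} → E) (n : ℕ) :
    (stepF i f i₀ φ)^[n] i₀ = i₀ := Function.iterate_fixed (stepF_i0 φ) n

theorem not_periodic {φ : {v : V // v ≠ i₀} → E} {v : V}
    (hreach : ∃ n, (stepF i f i₀ φ)^[n] v = i₀) (hv : v ≠ i₀) (m : ℕ) :
    (stepF i f i₀ φ)^[m + 1] v ≠ v := by
  intro hcyc
  set s := stepF i f i₀ φ with hs
  have hq : ∀ q, s^[q * (m + 1)] v = v := by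
    intro q
    induction q with
    | zero => simp
    | succ q ih =>
        rw [Nat.succ_mul, Function.iterate_add_apply, hcyc, ih]
  obtain ⟨n, hn⟩ := hreach
  have hle : n ≤ n * (m + 1) := Nat.le_mul_of_pos_right n (Nat.succ_pos m)
  have h1 : s^[n * (m + 1)] v = i₀ := by
    have := Function.iterate_add_apply s (n * (m + 1) - n) n v
    rw [Nat.sub_add_cancel hle] at this
    rw [this, hn, iterate_i0]
  exact hv ((hq n).symm.trans h1)

theorem connects_aux {φ : {v : V // v ≠ i₀} → E}
    (hinc : ∀ k : {v : V // v ≠ i₀}, i (φ k) = k.1 ∨ f (φ k) = k.1) (S : Finset E) :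
    ∀ (n : ℕ) (v : V), (stepF i f i₀ φ)^[n] v = i₀ →
      (∀ u : {v : V // v ≠ i₀}, (∃ m, (stepF i f i₀ φ)^[m] v = u.1) → φ u ∈ S) →
      Connects i f S v i₀ := by
  intro n
  induction n with
  | zero =>
      intro v h _
      simp only [Function.iterate_zero, id] at h
      rw [h]
      exact Relation.ReflTransGen.refl
  | succ n ih =>
      intro v h hmem
      by_cases hv : v = i₀
      · rw [hv]
        exact Relation.ReflTransGen.refl
      · have he : φ ⟨v, hv⟩ ∈ S := hmem ⟨v, hv⟩ ⟨0, rfl⟩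
        have hstep : ∃ e ∈ S, (i e = v ∧ f e = stepF i f i₀ φ v)
            ∨ (i e = stepF i f i₀ φ v ∧ f e = v) := by
          refine ⟨φ ⟨v, hv⟩, he, ?_⟩
          rw [stepF_ne φ hv]
          rcases hinc ⟨v, hv⟩ with h1 | h1
          · left; exact ⟨h1, by unfold other; rw [if_pos h1]⟩
          · by_cases h2 : i (φ ⟨v, hv⟩) = v
            · left; exact ⟨h2, by unfold other; rw [if_pos h2]⟩
            · right
              exact ⟨by unfold other; rw [if_neg h2], h1⟩
        refine Relation.ReflTransGen.head hstep (ih (stepF i f i₀ φ v) ?_ ?_)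
        · rw [← Function.iterate_succ_apply]; exact h
        · rintro u ⟨m, hm⟩
          exact hmem u ⟨m + 1, by rw [Function.iterate_succ_apply]; exact hm⟩

theorem connects_symm {S : Finset E} {a b : V} (h : Connects i f S a b) :
    Connects i f S b a := by
  have hsym : Symmetric (fun a b => ∃ e ∈ S, (i e = a ∧ f e = b) ∨ (i e = b ∧ f e = a)) := by
    rintro x y ⟨e, he, h1⟩
    exact ⟨e, he, by tauto⟩
  haveI : Std.Symm (fun a b => ∃ e ∈ S, (i e = a ∧ f e = b) ∨ (i e = b ∧ f e = a)) := ⟨hsym⟩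
  exact Relation.ReflTransGen.symmetric.symm _ _ h

theorem card_V' (i₀ : V) : Fintype.card {v : V // v ≠ i₀} + 1 = Fintype.card V := by
  have h1 : Fintype.card {v : V // v = i₀} = 1 := Fintype.card_subtype_eq i₀
  have h2 := Fintype.card_subtype_compl (fun v : V => v = i₀)
  have h3 : 0 < Fintype.card V := Fintype.card_pos_iff.mpr ⟨i₀⟩
  have h4 : Fintype.card {v : V // v ≠ i₀} = Fintype.card {v : V // ¬ v = i₀} := rfl
  omega

theorem good_image_spanning (hl : ∀ e : E, i e ≠ f e) {φ : {v : V // v ≠ i₀} → E}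
    (hG : Good i f i₀ φ) : IsSpanningTree i f (Finset.image φ univ) := by
  constructor
  · have hto : ∀ v : V, Connects i f (Finset.image φ univ) v i₀ := by
      intro v
      obtain ⟨n, hn⟩ := hG.2.2 v
      exact connects_aux hG.2.1 _ n v hn
        (fun u _ => Finset.mem_image_of_mem φ (mem_univ u))
    intro u v
    exact (hto u).trans (connects_symm (hto v))
  · rw [Finset.card_image_of_injective univ hG.1, Finset.card_univ]
    exact card_V' i₀


theorem other_of_rel {i f : E → V} {e : E} {a b : V}
    (h : (i e = a ∧ f e = b) ∨ (i e = b ∧ f e = a)) : other i f e a = b := by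
  unfold other
  rcases h with ⟨h1, h2⟩ | ⟨h1, h2⟩
  · rw [if_pos h1]; exact h2
  · by_cases h3 : i e = a
    · rw [if_pos h3]; exact h2.trans (h3.symm.trans h1)
    · rw [if_neg h3]; exact h1

/-- `v` can reach `i₀` within `n` steps using edges of `T`. -/
def RIn (i f : E → V) (i₀ : V) (T : Finset E) : ℕ → V → Prop
  | 0, v => v = i₀
  | n+1, v => v = i₀ ∨ ∃ e ∈ T, (i e = v ∨ f e = v) ∧ RIn i f i₀ T n (other i f e v)

theorem connects_RIn {i f : E → V} {i₀ : V} {T : Finset E} {v : V}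
    (h : Connects i f T v i₀) : ∃ n, RIn i f i₀ T n v := by
  induction h using Relation.ReflTransGen.head_induction_on with
  | refl => exact ⟨0, rfl⟩
  | head hab _ ih =>
      obtain ⟨n, hn⟩ := ih
      obtain ⟨e, he, hcase⟩ := hab
      refine ⟨n + 1, Or.inr ⟨e, he,
        hcase.elim (fun h => Or.inl h.1) (fun h => Or.inr h.2), ?_⟩⟩
      rw [other_of_rel hcase]
      exact hn

theorem exists_good {i f : E → V} {i₀ : V} (hl : ∀ e : E, i e ≠ f e) {T : Finset E}
    (hST : IsSpanningTree i f T) :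
    ∃ φ : {v : V // v ≠ i₀} → E, Good i f i₀ φ ∧ Finset.image φ univ = T := by
  classical
  have hR : ∀ v : V, ∃ n, RIn i f i₀ T n v := fun v => connects_RIn (hST.1 v i₀)
  have key : ∀ v : {v : V // v ≠ i₀}, ∃ e, e ∈ T ∧ (i e = v.1 ∨ f e = v.1) ∧
      Nat.find (hR (other i f e v.1)) < Nat.find (hR v.1) := by
    intro v
    have h1 : RIn i f i₀ T (Nat.find (hR v.1)) v.1 := Nat.find_spec (hR v.1)
    have hd0 : Nat.find (hR v.1) ≠ 0 := by
      intro h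
      rw [h] at h1
      simp only [RIn] at h1
      exact v.2 h1
    obtain ⟨m, hm⟩ : ∃ m, Nat.find (hR v.1) = m + 1 :=
      ⟨_, (Nat.succ_pred_eq_of_ne_zero hd0).symm⟩
    rw [hm] at h1
    simp only [RIn] at h1
    rcases h1 with h1 | ⟨e, he, hinc, hother⟩
    · exact absurd h1 v.2
    · refine ⟨e, he, hinc, ?_⟩
      calc Nat.find (hR (other i f e v.1)) ≤ m := Nat.find_min' _ hother
        _ < Nat.find (hR v.1) := by omega
  choose ψ hψT hψinc hψd using key
  have hinj : Function.Injective ψ := by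
    intro u v huv
    by_contra hne
    have hne' : u.1 ≠ v.1 := fun hc => hne (Subtype.ext hc)
    have hv_end : i (ψ u) = v.1 ∨ f (ψ u) = v.1 := by rw [huv]; exact hψinc v
    have hu_end : i (ψ v) = u.1 ∨ f (ψ v) = u.1 := by rw [← huv]; exact hψinc u
    have h1 : v.1 = other i f (ψ u) u.1 :=
      (other_endpoint (hψinc u) hv_end).resolve_left (fun hc => hne' hc.symm)
    have h2 : u.1 = other i f (ψ v) v.1 :=
      (other_endpoint (hψinc v) hu_end).resolve_left hne'
    have d1 := hψd u
    have d2 := hψd v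
    rw [← h1] at d1
    rw [← h2] at d2
    omega
  have hreach : ∀ m (v : V), Nat.find (hR v) ≤ m →
      ∃ k, (stepF i f i₀ ψ)^[k] v = i₀ := by
    intro m
    induction m with
    | zero =>
        intro v hv
        have h1 := Nat.find_spec (hR v)
        rw [Nat.le_zero.mp hv] at h1
        simp only [RIn] at h1
        exact ⟨0, h1⟩
    | succ m ih =>
        intro v hv
        by_cases hvi : v = i₀
        · exact ⟨0, hvi⟩
        · have hlt := hψd ⟨v, hvi⟩
          obtain ⟨k, hk⟩ := ih (other i f (ψ ⟨v, hvi⟩) v) (by omega)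
          refine ⟨k + 1, ?_⟩
          rw [Function.iterate_succ_apply, stepF_ne ψ hvi]
          exact hk
  refine ⟨ψ, ⟨hinj, hψinc, fun v => hreach (Nat.find (hR v)) v le_rfl⟩, ?_⟩
  apply Finset.eq_of_subset_of_card_le
  · intro e he
    obtain ⟨v, -, rfl⟩ := Finset.mem_image.mp he
    exact hψT v
  · rw [Finset.card_image_of_injective univ hinj, Finset.card_univ]
    have h1 := card_V' (V := V) i₀
    have h2 := hST.2
    omega

theorem good_connects_erase {i f : E → V} {i₀ : V} {φ : {v : V // v ≠ i₀} → E}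
    (hG : Good i f i₀ φ) (x : {v : V // v ≠ i₀}) :
    Connects i f ((Finset.image φ univ).erase (φ x)) (stepF i f i₀ φ x.1) i₀ := by
  obtain ⟨n, hn⟩ := hG.2.2 (stepF i f i₀ φ x.1)
  apply connects_aux hG.2.1 _ n _ hn
  rintro u ⟨m, hm⟩
  refine Finset.mem_erase.mpr ⟨?_, Finset.mem_image_of_mem φ (mem_univ u)⟩
  intro hc
  have hux : u = x := hG.1 hc
  subst hux
  have hper : (stepF i f i₀ φ)^[m + 1] u.1 = u.1 := by
    rw [Function.iterate_succ_apply]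
    exact hm
  exact not_periodic (hG.2.2 u.1) u.2 m hper

theorem good_not_connects (hl : ∀ e : E, i e ≠ f e) {i₀ : V} {φ : {v : V // v ≠ i₀} → E}
    (hG : Good i f i₀ φ) (v : {v : V // v ≠ i₀}) :
    ¬ Connects i f ((Finset.image φ univ).erase (φ v)) v.1 i₀ := by
  intro hcon
  have hstep : ∀ a b : V,
      (∃ e ∈ (Finset.image φ univ).erase (φ v), (i e = a ∧ f e = b) ∨ (i e = b ∧ f e = a)) →
      ((∃ m, (stepF i f i₀ φ)^[m] a = v.1) ↔ (∃ m, (stepF i f i₀ φ)^[m] b = v.1)) := by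
    rintro a b ⟨e, he, hcase⟩
    obtain ⟨hne, hmem⟩ := Finset.mem_erase.mp he
    obtain ⟨x, -, rfl⟩ := Finset.mem_image.mp hmem
    have hxv : x ≠ v := fun hc => hne (by rw [hc])
    have hxa : a = x.1 ∨ a = other i f (φ x) x.1 :=
      other_endpoint (hG.2.1 x) (hcase.elim (fun h => Or.inl h.1) (fun h => Or.inr h.2))
    have hab : other i f (φ x) a = b := other_of_rel hcase
    have hsx : stepF i f i₀ φ x.1 = other i f (φ x) x.1 := stepF_ne φ x.2
    have hAx : (∃ m, (stepF i f i₀ φ)^[m] x.1 = v.1) ↔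
        (∃ m, (stepF i f i₀ φ)^[m] (stepF i f i₀ φ x.1) = v.1) := by
      constructor
      · rintro ⟨m, hm⟩
        cases m with
        | zero => exact absurd (Subtype.ext hm) hxv
        | succ m =>
            rw [Function.iterate_succ_apply] at hm
            exact ⟨m, hm⟩
      · rintro ⟨m, hm⟩
        exact ⟨m + 1, by rw [Function.iterate_succ_apply]; exact hm⟩
    rcases hxa with h | h
    · have hb : b = stepF i f i₀ φ x.1 := by
        rw [hsx, ← hab, h]
      rw [h, hb]
      exact hAx
    · have hb : b = x.1 := by
        rw [← hab, h]
        exact other_other (hl (φ x)) (hG.2.1 x)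
      rw [h, ← hsx, hb]
      exact hAx.symm
  have hinv : ∀ {a b : V}, Connects i f ((Finset.image φ univ).erase (φ v)) a b →
      ((∃ m, (stepF i f i₀ φ)^[m] a = v.1) ↔ (∃ m, (stepF i f i₀ φ)^[m] b = v.1)) := by
    intro a b h
    induction h with
    | refl => exact Iff.rfl
    | tail _ hbc ih => exact ih.trans (hstep _ _ hbc)
  have hAi : ∃ m, (stepF i f i₀ φ)^[m] i₀ = v.1 := (hinv hcon).mp ⟨0, rfl⟩
  obtain ⟨m, hm⟩ := hAi
  rw [iterate_i0] at hm
  exact v.2 hm.symm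

theorem good_unique (hl : ∀ e : E, i e ≠ f e) {i₀ : V} {φ ψ : {v : V // v ≠ i₀} → E}
    (hφ : Good i f i₀ φ) (hψ : Good i f i₀ ψ)
    (him : Finset.image φ univ = Finset.image ψ univ) : φ = ψ := by
  funext v
  by_contra hne
  have hmem : φ v ∈ Finset.image ψ univ := him ▸ Finset.mem_image_of_mem φ (mem_univ v)
  obtain ⟨x, -, hx⟩ := Finset.mem_image.mp hmem
  have hx_end : i (φ v) = x.1 ∨ f (φ v) = x.1 := by rw [← hx]; exact hψ.2.1 x
  rcases other_endpoint (hφ.2.1 v) hx_end with h1 | h1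
  · have hxe : x = v := Subtype.ext h1
    rw [hxe] at hx
    exact hne hx.symm
  · have hstep : stepF i f i₀ ψ x.1 = v.1 := by
      rw [stepF_ne ψ x.2, hx, h1]
      exact other_other (hl (φ v)) (hφ.2.1 v)
    have hcon := good_connects_erase hψ x
    rw [hstep, hx, ← him] at hcon
    exact good_not_connects hl hφ v hcon

theorem det_good {i f : E → V} {i₀ : V} {φ : {v : V // v ≠ i₀} → E}
    (hG : Good i f i₀ φ) :
    (Matrix.of (fun k j : {v : V // v ≠ i₀} => eps i f j.1 (φ k)) : Matrix _ _ R).det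
      = ∏ k : {v : V // v ≠ i₀}, eps i f k.1 (φ k) := by
  classical
  have h := det_eq_prod_diag_of_weight (R := R)
      (Matrix.of (fun k j : {v : V // v ≠ i₀} => eps i f j.1 (φ k)))
      (fun v => Nat.find (hG.2.2 v.1)) ?cond
  · exact h
  case cond =>
    intro a b hne
    simp only [Matrix.of_apply] at hne
    rcases other_endpoint (hG.2.1 a) (eps_ne_zero_imp hne) with h1 | h1
    · exact Or.inr (Subtype.ext h1)
    · left
      have hstep : stepF i f i₀ φ a.1 = b.1 := by
        rw [stepF_ne φ a.2]
        exact h1.symm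
      have hd0 : Nat.find (hG.2.2 a.1) ≠ 0 := by
        intro h0
        have hsp := Nat.find_spec (hG.2.2 a.1)
        rw [h0] at hsp
        exact a.2 hsp
      have hspec := Nat.find_spec (hG.2.2 a.1)
      obtain ⟨m, hm⟩ : ∃ m, Nat.find (hG.2.2 a.1) = m + 1 :=
        ⟨_, (Nat.succ_pred_eq_of_ne_zero hd0).symm⟩
      rw [hm] at hspec
      rw [Function.iterate_succ_apply, hstep] at hspec
      have hle : Nat.find (hG.2.2 b.1) ≤ m := Nat.find_min' _ hspec
      show Nat.find (hG.2.2 b.1) < Nat.find (hG.2.2 a.1)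
      omega

theorem det_unreach {i f : E → V} {i₀ : V} {φ : {v : V // v ≠ i₀} → E}
    (hl : ∀ e : E, i e ≠ f e)
    (hinc : ∀ k : {v : V // v ≠ i₀}, i (φ k) = k.1 ∨ f (φ k) = k.1)
    (hun : ∃ v : V, ¬ ∃ n, (stepF i f i₀ φ)^[n] v = i₀) :
    (Matrix.of (fun k j : {v : V // v ≠ i₀} => eps i f j.1 (φ k)) : Matrix _ _ R).det = 0 := by
  classical
  obtain ⟨v₀, hv₀⟩ := hun
  have hv₀i : v₀ ≠ i₀ := fun hc => hv₀ ⟨0, hc⟩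
  set M : Matrix {v : V // v ≠ i₀} {v : V // v ≠ i₀} R :=
    Matrix.of (fun k j : {v : V // v ≠ i₀} => eps i f j.1 (φ k)) with hM
  set A : {v : V // v ≠ i₀} → Prop :=
    (fun x => ¬ ∃ n, (stepF i f i₀ φ)^[n] x.1 = i₀) with hA
  have hother_ne : ∀ x : {v : V // v ≠ i₀}, A x → other i f (φ x) x.1 ≠ i₀ := by
    intro x hx hc
    exact hx ⟨1, by rw [Function.iterate_one, stepF_ne φ x.2]; exact hc⟩
  have hotherA : ∀ (x : {v : V // v ≠ i₀}) (hx : A x),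
      A ⟨other i f (φ x) x.1, hother_ne x hx⟩ := by
    rintro x hx ⟨n, hn⟩
    exact hx ⟨n + 1, by rw [Function.iterate_succ_apply, stepF_ne φ x.2]; exact hn⟩
  have hsupp : ∀ (k j : {v : V // v ≠ i₀}), A k → ¬ A j → M k j = 0 := by
    intro k j hk hj
    by_contra hne
    have hne' : eps i f j.1 (φ k) ≠ (0:R) := hne
    rcases other_endpoint (hinc k) (eps_ne_zero_imp hne') with h1 | h1
    · exact hj (by rw [show j = k from Subtype.ext h1]; exact hk)
    · exact hj (by
        rw [show j = (⟨other i f (φ k) k.1, hother_ne k hk⟩ : {v : V // v ≠ i₀}) from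
          Subtype.ext h1]
        exact hotherA k hk)
  have hrow : ∀ k : {v : V // v ≠ i₀}, A k → ∑ j : {v : V // v ≠ i₀}, M k j = 0 := by
    intro k hk
    have hii : i (φ k) ≠ i₀ ∧ f (φ k) ≠ i₀ := by
      have ho := hother_ne k hk
      rcases hinc k with h | h
      · have hof : other i f (φ k) k.1 = f (φ k) := by unfold other; rw [if_pos h]
        rw [hof] at ho
        exact ⟨by rw [h]; exact k.2, ho⟩
      · have hne : i (φ k) ≠ k.1 := fun hc => hl (φ k) (hc.trans h.symm)
        have hof : other i f (φ k) k.1 = i (φ k) := by unfold other; rw [if_neg hne]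
        rw [hof] at ho
        exact ⟨ho, by rw [h]; exact k.2⟩
    have h1 : ∑ j : {v : V // v ≠ i₀}, M k j = ∑ v ∈ univ.erase i₀, (eps i f v (φ k) : R) :=
      (Finset.sum_subtype (univ.erase i₀) (fun x => by simp)
        (fun v => (eps i f v (φ k) : R))).symm
    have h2 : ∑ v ∈ univ.erase i₀, (eps i f v (φ k) : R) = ∑ v : V, (eps i f v (φ k) : R) := by
      apply Finset.sum_erase
      exact eps_eq_zero hii.1 hii.2
    rw [h1, h2, sum_eps (hl (φ k))]
  haveI : DecidablePred A := Classical.decPred A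
  rw [← Matrix.det_submatrix_equiv_self (Equiv.sumCompl A) M]
  rw [← Matrix.fromBlocks_toBlocks (M.submatrix (Equiv.sumCompl A) (Equiv.sumCompl A))]
  have h12 : (M.submatrix (Equiv.sumCompl A) (Equiv.sumCompl A)).toBlocks₁₂ = 0 := by
    ext p q
    exact hsupp p.1 q.1 p.2 q.2
  rw [h12, Matrix.det_fromBlocks_zero₁₂]
  apply mul_eq_zero_of_left
  haveI : Nonempty {x : {v : V // v ≠ i₀} // A x} := ⟨⟨⟨v₀, hv₀i⟩, hv₀⟩⟩
  apply det_eq_zero_of_row_sum_zero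
  intro k
  have h2 : ∑ j : {x : {v : V // v ≠ i₀} // A x},
      (M.submatrix (Equiv.sumCompl A) (Equiv.sumCompl A)).toBlocks₁₁ k j
      = ∑ j ∈ univ.filter A, M k.1 j :=
    (Finset.sum_subtype (univ.filter A) (fun x => by simp)
      (fun j => M k.1 j)).symm
  rw [h2, Finset.sum_filter_of_ne ?side, hrow k.1 k.2]
  case side =>
    intro x _ hx
    by_contra hAx
    exact hx (hsupp k.1 x k.2 (fun hA' => hA' hAx))

end Graph

end MTT

/-- Weighted matrix-tree theorem: deleting any row `i₀` and column `i₀` from the weighted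
Laplacian of a connected loopless multigraph yields a matrix whose determinant is the
spanning-tree generating polynomial `s(α, G)`. -/
theorem matrixTree {V E R : Type} [Fintype V] [Fintype E] [DecidableEq V] [DecidableEq E]
    [CommRing R] (i f : E → V) (hl : ∀ e : E, i e ≠ f e)
    (hconn : ∀ u v : V, Connects i f Finset.univ u v) (α : E → R) (i₀ : V) :
    ((Lap i f α).submatrix (fun a : {v : V // v ≠ i₀} => (a : V))
        (fun a : {v : V // v ≠ i₀} => (a : V))).det = treeSum i f α := by
  classical
  open MTT in
  have hsub : (Lap i f α).submatrix (fun a : {v : V // v ≠ i₀} => (a : V))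
      (fun a : {v : V // v ≠ i₀} => (a : V))
      = Matrix.of (fun k j : {v : V // v ≠ i₀} =>
          ∑ e, (α e * eps i f k.1 e) * eps i f j.1 e) := by
    ext k j
    show Lap i f α k.1 j.1 = _
    rw [lap_apply i f hl α k.1 j.1]
    exact Finset.sum_congr rfl (fun e _ => by ring)
  rw [hsub]
  have hexp : (Matrix.of (fun k j : {v : V // v ≠ i₀} =>
      ∑ e, (α e * eps i f k.1 e) * eps i f j.1 e) : Matrix _ _ R).det
      = ∑ φ : {v : V // v ≠ i₀} → E,
          (∏ k : {v : V // v ≠ i₀}, α (φ k) * eps i f k.1 (φ k)) *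
            (Matrix.of (fun k j : {v : V // v ≠ i₀} => eps i f j.1 (φ k)) : Matrix _ _ R).det := by
    let w : E → ({v : V // v ≠ i₀} → R) := fun e j => eps i f j.1 e
    let c : {v : V // v ≠ i₀} → E → R := fun k e => α e * eps i f k.1 e
    let D := (Matrix.detRowAlternating :
        ({v : V // v ≠ i₀} → R) [⋀^({v : V // v ≠ i₀})]→ₗ[R] R).toMultilinearMap
    have h1 : (Matrix.of (fun k j : {v : V // v ≠ i₀} =>
        ∑ e, (α e * eps i f k.1 e) * eps i f j.1 e) : Matrix _ _ R)
        = Matrix.of (fun k : {v : V // v ≠ i₀} => ∑ e, c k e • w e) := by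
      ext k j
      show _ = (∑ e, c k e • w e) j
      rw [Finset.sum_apply]
      exact Finset.sum_congr rfl (fun e _ => by rw [Pi.smul_apply, smul_eq_mul])
    rw [h1]
    have h2 := D.map_sum (g := fun (k : {v : V // v ≠ i₀}) (e : E) => c k e • w e)
    have h3 : ∀ φ : {v : V // v ≠ i₀} → E,
        D (fun k => c k (φ k) • w (φ k))
        = (∏ k : {v : V // v ≠ i₀}, α (φ k) * eps i f k.1 (φ k)) *
            (Matrix.of (fun k j : {v : V // v ≠ i₀} => eps i f j.1 (φ k)) : Matrix _ _ R).det := by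
      intro φ
      rw [MultilinearMap.map_smul_univ, smul_eq_mul]
      rfl
    calc (Matrix.of (fun k : {v : V // v ≠ i₀} => ∑ e, c k e • w e) : Matrix _ _ R).det
        = D (fun k => ∑ e, c k e • w e) := rfl
      _ = ∑ φ : {v : V // v ≠ i₀} → E, D (fun k => c k (φ k) • w (φ k)) := h2
      _ = ∑ φ : {v : V // v ≠ i₀} → E,
            (∏ k : {v : V // v ≠ i₀}, α (φ k) * eps i f k.1 (φ k)) *
              (Matrix.of (fun k j : {v : V // v ≠ i₀} => eps i f j.1 (φ k))
                : Matrix _ _ R).det :=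
          Finset.sum_congr rfl (fun φ _ => h3 φ)
  rw [hexp]
  have hterm : ∀ φ : {v : V // v ≠ i₀} → E, ¬ Good i f i₀ φ →
      (∏ k : {v : V // v ≠ i₀}, α (φ k) * eps i f k.1 (φ k)) *
        (Matrix.of (fun k j : {v : V // v ≠ i₀} => eps i f j.1 (φ k)) : Matrix _ _ R).det
          = 0 := by
    intro φ hng
    by_cases hinj : Function.Injective φ
    · by_cases hinc : ∀ k : {v : V // v ≠ i₀}, i (φ k) = k.1 ∨ f (φ k) = k.1
      · have hun : ∃ v : V, ¬ ∃ n, (stepF i f i₀ φ)^[n] v = i₀ := by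
          by_contra hc
          push_neg at hc
          exact hng ⟨hinj, hinc, fun v => hc v⟩
        rw [det_unreach hl hinc hun, mul_zero]
      · push_neg at hinc
        obtain ⟨k, hk1, hk2⟩ := hinc
        apply mul_eq_zero_of_left
        apply Finset.prod_eq_zero (Finset.mem_univ k)
        rw [eps_eq_zero hk1 hk2, mul_zero]
    · apply mul_eq_zero_of_right
      have hinj' : ∃ a b : {v : V // v ≠ i₀}, φ a = φ b ∧ a ≠ b := by
        unfold Function.Injective at hinj
        push_neg at hinj
        obtain ⟨a, b, h1', h2'⟩ := hinj
        exact ⟨a, b, h1', h2'⟩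
      obtain ⟨a, b, hab, hne⟩ := hinj'
      apply Matrix.det_zero_of_row_eq hne
      funext j
      show eps i f j.1 (φ a) = eps i f j.1 (φ b)
      rw [hab]
  have hfilter := Finset.sum_filter_of_ne
    (s := (Finset.univ : Finset ({v : V // v ≠ i₀} → E)))
    (f := fun φ => (∏ k : {v : V // v ≠ i₀}, α (φ k) * eps i f k.1 (φ k)) *
      (Matrix.of (fun k j : {v : V // v ≠ i₀} => eps i f j.1 (φ k)) : Matrix _ _ R).det)
    (p := Good i f i₀)
    (fun φ _ h => by by_contra hg; exact h (hterm φ hg))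
  rw [← hfilter]
  have hgoodterm : ∀ φ ∈ Finset.univ.filter (Good i f i₀),
      (∏ k : {v : V // v ≠ i₀}, α (φ k) * eps i f k.1 (φ k)) *
        (Matrix.of (fun k j : {v : V // v ≠ i₀} => eps i f j.1 (φ k)) : Matrix _ _ R).det
      = ∏ e ∈ Finset.image φ Finset.univ, α e := by
    intro φ hφ
    have hG : Good i f i₀ φ := (Finset.mem_filter.mp hφ).2
    rw [det_good hG, Finset.prod_mul_distrib, mul_assoc, ← Finset.prod_mul_distrib]
    rw [Finset.prod_congr rfl (fun k _ => eps_mul_self (hG.2.1 k)),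
      Finset.prod_const_one, mul_one]
    exact (Finset.prod_image (fun x _ y _ h => hG.1 h)).symm
  rw [Finset.sum_congr rfl hgoodterm]
  unfold treeSum
  apply Finset.sum_bij (i := fun (φ : {v : V // v ≠ i₀} → E) _ => Finset.image φ Finset.univ)
  · intro φ hφ
    exact Finset.mem_filter.mpr
      ⟨Finset.mem_univ _, good_image_spanning hl (Finset.mem_filter.mp hφ).2⟩
  · intro φ1 h1 φ2 h2 heq
    exact good_unique hl (Finset.mem_filter.mp h1).2 (Finset.mem_filter.mp h2).2 heq
  · intro T hT
    obtain ⟨φ, hG, him⟩ := exists_good hl (Finset.mem_filter.mp hT).2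
    exact ⟨φ, Finset.mem_filter.mpr ⟨Finset.mem_univ _, hG⟩, him⟩
  · intro φ hφ
    rfl
end

section
/- (All-minors matrix-tree / Fiedler) Let G be a connected finite loopless multigraph with edge weights α in a commutative ring. The principal minor of the weighted Laplacian L(G,α) obtained by deleting the rows and columns indexed by distinct vertices i₁,…,i_k equals Σ Π_{e ∈ F} α(e), where the sum runs over all spanning forests F of G consisting of exactly k trees such that each tree contains exactly one of the vertices i₁,…,i_k. -/
/-- `T` is a spanning forest each of whose trees contains exactly one vertex of `S`. -/
def IsSpanningForest {V E : Type} [Fintype V] (i f : E → V) (S : Finset V)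
    (T : Finset E) : Prop :=
  T.card + S.card = Fintype.card V ∧ (∀ v : V, ∃ s ∈ S, Connects i f T v s) ∧
    ∀ s ∈ S, ∀ s' ∈ S, Connects i f T s s' → s = s'

section AuxGraph
variable {V E : Type} {i f : E → V}

lemma connects_mono {T T' : Finset E} (h : T ⊆ T') {u v : V}
    (hc : Connects i f T u v) : Connects i f T' u v :=
  by
  induction hc with
  | refl => exact .refl
  | tail _ hbc ih =>
    obtain ⟨e, he, hx⟩ := hbc
    exact ih.tail ⟨e, h he, hx⟩

lemma connects_symm {T : Finset E} {u v : V} (h : Connects i f T u v) :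
    Connects i f T v u := by
  induction h with
  | refl => exact .refl
  | tail _ hbc ih =>
    obtain ⟨e, he, hx⟩ := hbc
    exact Relation.ReflTransGen.trans (.single ⟨e, he, hx.symm⟩) ih

lemma connects_trans {T : Finset E} {u v w : V} (h : Connects i f T u v)
    (h' : Connects i f T v w) : Connects i f T u w :=
  Relation.ReflTransGen.trans h h'

lemma connects_isolated {T : Finset E} {w : V}
    (hw : ∀ e ∈ T, i e ≠ w ∧ f e ≠ w) {v : V} (h : Connects i f T w v) : v = w := by
  induction h with
  | refl => rfl
  | tail _ hbc ih =>
    obtain ⟨e, he, hx⟩ := hbc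
    exfalso
    rcases hx with ⟨h1, _⟩ | ⟨_, h2⟩
    · exact (hw e he).1 (by rw [h1, ih])
    · exact (hw e he).2 (by rw [h2, ih])

lemma connects_empty {u v : V} (h : Connects i f (∅ : Finset E) u v) : u = v :=
  (connects_isolated (by simp) h).symm

lemma connects_stay {T : Finset E} {S : Finset V}
    (hend : ∀ e ∈ T, i e ∉ S ∧ f e ∉ S) {w v : V} (hw : w ∉ S)
    (h : Connects i f T w v) : v ∉ S := by
  induction h with
  | refl => exact hw
  | tail _ hbc ih =>
    obtain ⟨e, he, hx⟩ := hbc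
    rcases hx with ⟨_, h2⟩ | ⟨h1, _⟩
    · exact h2 ▸ (hend e he).2
    · exact h1 ▸ (hend e he).1

lemma connects_erase_leaf [DecidableEq V] [DecidableEq E] {T : Finset E} {e : E} {w u₀ : V}
    (hinc : (i e = w ∧ f e = u₀) ∨ (i e = u₀ ∧ f e = w)) (hu : u₀ ≠ w)
    (huniq : ∀ e' ∈ T, (i e' = w ∨ f e' = w) → e' = e) {u v : V}
    (h : Connects i f T u v) :
    Connects i f (T.erase e) (if u = w then u₀ else u) (if v = w then u₀ else v) := by
  induction h with
  | refl => exact .refl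
  | @tail b c _ hbc ih =>
    obtain ⟨e', he', hx⟩ := hbc
    by_cases hee : e' = e
    · subst hee
      have : (if b = w then u₀ else b) = (if c = w then u₀ else c) := by
        rcases hinc with ⟨h1, h2⟩ | ⟨h1, h2⟩ <;> rcases hx with ⟨g1, g2⟩ | ⟨g1, g2⟩ <;>
          · rw [← g1, ← g2, h1, h2]; simp [hu]
      exact this ▸ ih
    · have hb : b ≠ w := by
        rintro rfl
        rcases hx with ⟨h1, _⟩ | ⟨_, h2⟩
        · exact hee (huniq e' he' (Or.inl h1))
        · exact hee (huniq e' he' (Or.inr h2))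
      have hc : c ≠ w := by
        rintro rfl
        rcases hx with ⟨_, h2⟩ | ⟨h1, _⟩
        · exact hee (huniq e' he' (Or.inr h2))
        · exact hee (huniq e' he' (Or.inl h1))
      refine ih.tail ⟨e', Finset.mem_erase.2 ⟨hee, he'⟩, ?_⟩
      rw [if_neg hb, if_neg hc]
      exact hx
end AuxGraph

section ForestLeaf
variable {V E : Type} [Fintype V] [DecidableEq V] [DecidableEq E] {i f : E → V}

lemma forest_insert_iff (hl : ∀ e : E, i e ≠ f e) {S : Finset V} {T : Finset E}
    {e : E} {w : V} (hw : w ∉ S) (he : e ∈ T) (hinc : i e = w ∨ f e = w)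
    (huniq : ∀ e' ∈ T, (i e' = w ∨ f e' = w) → e' = e) :
    IsSpanningForest i f S T ↔ IsSpanningForest i f (insert w S) (T.erase e) := by
  set u₀ : V := if i e = w then f e else i e with hu₀def
  have hinc' : (i e = w ∧ f e = u₀) ∨ (i e = u₀ ∧ f e = w) := by
    rcases hinc with h | h
    · left; exact ⟨h, by rw [hu₀def, if_pos h]⟩
    · by_cases h' : i e = w
      · left; exact ⟨h', by rw [hu₀def, if_pos h']⟩
      · right; exact ⟨by rw [hu₀def, if_neg h'], h⟩
  have hu : u₀ ≠ w := by
    intro h'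
    rcases hinc' with ⟨h1, h2⟩ | ⟨h1, h2⟩
    · exact hl e (h1.trans (h2.trans h').symm)
    · exact hl e ((h1.trans h').trans h2.symm)
  have hmap := fun {u v : V} (h : Connects i f T u v) =>
    connects_erase_leaf (e := e) hinc' hu huniq h
  have hiso : ∀ v : V, Connects i f (T.erase e) w v → v = w := by
    intro v hv
    refine connects_isolated ?_ hv
    intro e' he'
    rw [Finset.mem_erase] at he'
    constructor
    · intro h'; exact he'.1 (huniq e' he'.2 (Or.inl h'))
    · intro h'; exact he'.1 (huniq e' he'.2 (Or.inr h'))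
  have hwu : Connects i f T w u₀ := by
    refine Relation.ReflTransGen.single ⟨e, he, ?_⟩
    rcases hinc' with ⟨h1, h2⟩ | ⟨h1, h2⟩
    · exact Or.inl ⟨h1, h2⟩
    · exact Or.inr ⟨h1, h2⟩
  have hT1 : 1 ≤ T.card := Finset.card_pos.2 ⟨e, he⟩
  constructor
  · rintro ⟨hcard, hall, hsep⟩
    refine ⟨?_, ?_, ?_⟩
    · rw [Finset.card_erase_of_mem he, Finset.card_insert_of_notMem hw]
      omega
    · intro v
      by_cases hv : v = w
      · exact ⟨w, Finset.mem_insert_self _ _, hv ▸ Relation.ReflTransGen.refl⟩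
      · obtain ⟨s, hs, hcs⟩ := hall v
        have hsw : s ≠ w := fun h => hw (h ▸ hs)
        have := hmap hcs
        rw [if_neg hv, if_neg hsw] at this
        exact ⟨s, Finset.mem_insert_of_mem hs, this⟩
    · intro s hs s' hs' hss
      rcases Finset.mem_insert.1 hs with rfl | hs0
      · exact (hiso s' hss).symm
      · rcases Finset.mem_insert.1 hs' with rfl | hs'0
        · exact hiso s (connects_symm hss)
        · exact hsep s hs0 s' hs'0 (connects_mono (Finset.erase_subset _ _) hss)
  · rintro ⟨hcard, hall, hsep⟩
    rw [Finset.card_erase_of_mem he, Finset.card_insert_of_notMem hw] at hcard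
    refine ⟨by omega, ?_, ?_⟩
    · intro v
      obtain ⟨s, hs, hcs⟩ := hall v
      rcases Finset.mem_insert.1 hs with rfl | hs0
      · -- v connects to w in erase; then to u₀ in T; find u₀'s root
        obtain ⟨s', hs', hcs'⟩ := hall u₀
        rcases Finset.mem_insert.1 hs' with rfl | hs'0
        · exact absurd (hiso u₀ (connects_symm hcs')) hu
        · refine ⟨s', hs'0, ?_⟩
          have h1 : Connects i f T v s :=
            connects_mono (Finset.erase_subset _ _) hcs
          have h2 : Connects i f T u₀ s' :=
            connects_mono (Finset.erase_subset _ _) hcs'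
          exact connects_trans (connects_trans h1 hwu) h2
      · exact ⟨s, hs0, connects_mono (Finset.erase_subset _ _) hcs⟩
    · intro s hs s' hs' hss
      have hsw : s ≠ w := fun h => hw (h ▸ hs)
      have hs'w : s' ≠ w := fun h => hw (h ▸ hs')
      have := hmap hss
      rw [if_neg hsw, if_neg hs'w] at this
      exact hsep s (Finset.mem_insert_of_mem hs) s' (Finset.mem_insert_of_mem hs') this

end ForestLeaf

open Finset in
lemma det_sq_submatrix {m n R : Type} [Fintype m] [DecidableEq m] [Fintype n]
    [DecidableEq n] [CommRing R] (A : Matrix m m R) (ρ κ : m ≃ n) :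
    ((A.submatrix ρ.symm κ.symm).det) ^ 2 = (A.det) ^ 2 := by
  have h1 : A.submatrix ρ.symm κ.symm
      = (A.submatrix ρ.symm ρ.symm).submatrix id (κ.symm.trans ρ) := by
    ext a b
    simp [Matrix.submatrix_apply]
  rw [h1, Matrix.det_permute' (κ.symm.trans ρ) _, Matrix.det_submatrix_equiv_self,
    mul_pow]
  rcases Int.units_eq_one_or (Equiv.Perm.sign (κ.symm.trans ρ)) with h | h <;>
    rw [h] <;> push_cast <;> ring

open scoped Classical in
open Finset in
lemma key_det {V E R : Type} [Fintype V] [Fintype E] [DecidableEq V] [DecidableEq E]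
    [CommRing R] (i f : E → V) (hl : ∀ e : E, i e ≠ f e) :
    ∀ (n : ℕ) (S : Finset V) (T : Finset E), T.card = n →
      T.card + S.card = Fintype.card V →
      ∀ g : {v : V // v ∉ S} ≃ {e : E // e ∈ T},
      (Matrix.det (Matrix.of fun a b : {v : V // v ∉ S} => (eps i f a.1 (g b).1 : R))) ^ 2
        = if IsSpanningForest i f S T then 1 else 0 := by
  intro n
  induction n with
  | zero =>
    intro S T hn hcard g
    have hT : T = ∅ := Finset.card_eq_zero.1 hn
    subst hT
    have hcW : Fintype.card {v : V // v ∉ S} = 0 := by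
      rw [Fintype.card_congr g, Fintype.card_coe]; rfl
    haveI : IsEmpty {v : V // v ∉ S} := Fintype.card_eq_zero_iff.1 hcW
    rw [Matrix.det_isEmpty, one_pow, if_pos]
    refine ⟨by simpa using hcard, ?_, ?_⟩
    · intro v
      have hv : v ∈ S := by
        by_contra hv
        exact (IsEmpty.false (⟨v, hv⟩ : {v : V // v ∉ S}))
      exact ⟨v, hv, Relation.ReflTransGen.refl⟩
    · intro s _ s' _ h
      exact connects_empty h
  | succ n IH =>
    intro S T hn hcard g
    by_cases hA : ∃ w : {v : V // v ∉ S},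
        (T.filter fun e => i e = w.1 ∨ f e = w.1).card = 0
    · obtain ⟨w, hdeg⟩ := hA
      have hne : ∀ e ∈ T, ¬(i e = w.1 ∨ f e = w.1) := by
        intro e he h
        have : e ∈ T.filter fun e => i e = w.1 ∨ f e = w.1 :=
          Finset.mem_filter.2 ⟨he, h⟩
        rw [Finset.card_eq_zero.1 hdeg] at this
        exact absurd this (Finset.notMem_empty e)
      have hdet : (Matrix.of fun a b : {v : V // v ∉ S} =>
          (eps i f a.1 (g b).1 : R)).det = 0 := by
        refine Matrix.det_eq_zero_of_row_eq_zero w ?_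
        intro b
        have := hne (g b).1 (g b).2
        push_neg at this
        simp only [Matrix.of_apply, eps, if_neg this.1, if_neg this.2]
      rw [hdet, if_neg]
      · ring
      · rintro ⟨_, hall, _⟩
        obtain ⟨s, hs, hc⟩ := hall w.1
        have : s = w.1 := connects_isolated
          (fun e he => by have := hne e he; push_neg at this; exact this)
          hc
        exact w.2 (this ▸ hs)
    by_cases hB : ∃ w : {v : V // v ∉ S},
        (T.filter fun e => i e = w.1 ∨ f e = w.1).card = 1
    · obtain ⟨w, hdeg⟩ := hB
      obtain ⟨e, hfe⟩ := Finset.card_eq_one.1 hdeg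
      have hef : e ∈ T.filter fun e => i e = w.1 ∨ f e = w.1 := by
        rw [hfe]; exact Finset.mem_singleton_self e
      have he : e ∈ T := (Finset.mem_filter.1 hef).1
      have hince : i e = w.1 ∨ f e = w.1 := (Finset.mem_filter.1 hef).2
      have huniq : ∀ e' ∈ T, (i e' = w.1 ∨ f e' = w.1) → e' = e := fun e' he' h =>
        Finset.mem_singleton.1 (hfe ▸ Finset.mem_filter.2 ⟨he', h⟩)
      have hcW : Fintype.card {v : V // v ∉ S} = n + 1 := by
        rw [Fintype.card_congr g, Fintype.card_coe, hn]
      obtain ⟨ρ, hρw⟩ : ∃ ρ : {v : V // v ∉ S} ≃ Fin (n + 1), ρ w = 0 := by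
        refine ⟨(Fintype.equivFinOfCardEq hcW).trans
          (Equiv.swap ((Fintype.equivFinOfCardEq hcW) w) 0), ?_⟩
        simp [Equiv.swap_apply_left]
      set c₀ : {v : V // v ∉ S} := g.symm ⟨e, he⟩ with hc₀def
      obtain ⟨κ, hκc⟩ : ∃ κ : {v : V // v ∉ S} ≃ Fin (n + 1), κ c₀ = 0 := by
        refine ⟨(Fintype.equivFinOfCardEq hcW).trans
          (Equiv.swap ((Fintype.equivFinOfCardEq hcW) c₀) 0), ?_⟩
        simp [Equiv.swap_apply_left]
      set A := Matrix.of fun a b : {v : V // v ∉ S} => (eps i f a.1 (g b).1 : R) with hAdef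
      set M := A.submatrix ρ.symm κ.symm with hMdef
      have hAM : A.det ^ 2 = M.det ^ 2 := (det_sq_submatrix A ρ κ).symm
      have hρ0 : ρ.symm 0 = w := by rw [← hρw, Equiv.symm_apply_apply]
      have hκ0 : κ.symm 0 = c₀ := by rw [← hκc, Equiv.symm_apply_apply]
      have hMj : ∀ j : Fin (n + 1), j ≠ 0 → M 0 j = 0 := by
        intro j hj
        have hne : ¬(i (g (κ.symm j)).1 = w.1 ∨ f (g (κ.symm j)).1 = w.1) := by
          intro h
          have he' := huniq _ (g (κ.symm j)).2 h
          have h1 : g (κ.symm j) = ⟨e, he⟩ := Subtype.ext he'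
          have h2 : κ.symm j = c₀ := by
            have := congrArg g.symm h1
            rwa [Equiv.symm_apply_apply] at this
          rw [← hκ0] at h2
          exact hj (κ.symm.injective h2)
        push_neg at hne
        show A (ρ.symm 0) (κ.symm j) = 0
        rw [hρ0]
        show eps i f w.1 (g (κ.symm j)).1 = 0
        simp [eps, hne.1, hne.2]
      have hdM : M.det = M 0 0 * (M.submatrix Fin.succ Fin.succ).det := by
        rw [Matrix.det_succ_row_zero]
        rw [Finset.sum_eq_single 0]
        · simp
        · intro j _ hj; rw [hMj j hj]; ring
        · intro h; exact absurd (Finset.mem_univ _) h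
      have hM00v : M 0 0 = eps i f w.1 e := by
        show A (ρ.symm 0) (κ.symm 0) = _
        rw [hρ0, hκ0]
        show eps i f w.1 (g c₀).1 = _
        rw [hc₀def, g.apply_symm_apply]
      have hM00 : M 0 0 * M 0 0 = 1 := by
        rw [hM00v]
        rcases hince with h | h
        · simp [eps, h]
        · have h' : i e ≠ w.1 := fun hh => hl e (hh.trans h.symm)
          simp [eps, h, h']
      -- new data
      have hwS : w.1 ∉ S := w.2
      have hcV : Fintype.card V = (n + 1) + S.card := by omega
      have hcW' : Fintype.card {v : V // v ∉ insert w.1 S} = n := by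
        rw [Fintype.card_subtype_compl, Fintype.card_coe,
          Finset.card_insert_of_notMem hwS]
        omega
      have hT'card : (T.erase e).card = n := by
        rw [Finset.card_erase_of_mem he, hn]
        omega
      have hcT' : Fintype.card {e' : E // e' ∈ T.erase e} = n := by
        rw [Fintype.card_coe, hT'card]
      have hcard' : (T.erase e).card + (insert w.1 S).card = Fintype.card V := by
        rw [hT'card, Finset.card_insert_of_notMem hwS]
        omega
      obtain ⟨φe, hφv⟩ : ∃ φe : Fin n ≃ {v : V // v ∉ insert w.1 S},
          ∀ a : Fin n, (φe a).1 = (ρ.symm a.succ).1 := by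
        have hmem : ∀ a : Fin n, (ρ.symm a.succ).1 ∉ insert w.1 S := by
          intro a
          rw [Finset.mem_insert]
          push_neg
          refine ⟨?_, (ρ.symm a.succ).2⟩
          intro h
          have h1 : ρ.symm a.succ = w := Subtype.ext h
          rw [← hρ0] at h1
          exact (Fin.succ_ne_zero a) (ρ.symm.injective h1)
        set φ : Fin n → {v : V // v ∉ insert w.1 S} :=
          fun a => ⟨(ρ.symm a.succ).1, hmem a⟩ with hφdef
        have hφinj : Function.Injective φ := by
          intro a b h
          have h1 : (ρ.symm a.succ).1 = (ρ.symm b.succ).1 := by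
            rw [Subtype.ext_iff] at h
            exact h
          have h2 : ρ.symm a.succ = ρ.symm b.succ := Subtype.ext h1
          exact Fin.succ_injective n (ρ.symm.injective h2)
        have hφbij : Function.Bijective φ :=
          (Fintype.bijective_iff_injective_and_card φ).2
            ⟨hφinj, by rw [Fintype.card_fin, hcW']⟩
        exact ⟨Equiv.ofBijective φ hφbij, fun a => rfl⟩
      obtain ⟨χe, hχv⟩ : ∃ χe : Fin n ≃ {e' : E // e' ∈ T.erase e},
          ∀ b : Fin n, (χe b).1 = (g (κ.symm b.succ)).1 := by
        have hmem : ∀ b : Fin n, (g (κ.symm b.succ)).1 ∈ T.erase e := by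
          intro b
          refine Finset.mem_erase.2 ⟨?_, (g (κ.symm b.succ)).2⟩
          intro h
          have h1 : g (κ.symm b.succ) = ⟨e, he⟩ := Subtype.ext h
          have h2 : κ.symm b.succ = c₀ := by
            have := congrArg g.symm h1
            rwa [Equiv.symm_apply_apply] at this
          rw [← hκ0] at h2
          exact (Fin.succ_ne_zero b) (κ.symm.injective h2)
        set χ : Fin n → {e' : E // e' ∈ T.erase e} :=
          fun b => ⟨(g (κ.symm b.succ)).1, hmem b⟩ with hχdef
        have hχinj : Function.Injective χ := by
          intro a b h
          have h1 : (g (κ.symm a.succ)).1 = (g (κ.symm b.succ)).1 := by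
            rw [Subtype.ext_iff] at h
            exact h
          have h2 : g (κ.symm a.succ) = g (κ.symm b.succ) := Subtype.ext h1
          exact Fin.succ_injective n (κ.symm.injective (g.injective h2))
        have hχbij : Function.Bijective χ :=
          (Fintype.bijective_iff_injective_and_card χ).2
            ⟨hχinj, by rw [Fintype.card_fin, hcT']⟩
        exact ⟨Equiv.ofBijective χ hχbij, fun b => rfl⟩
      set g' : {v : V // v ∉ insert w.1 S} ≃ {e' : E // e' ∈ T.erase e} :=
        φe.symm.trans χe with hg'def
      set A' := Matrix.of fun a b : {v : V // v ∉ insert w.1 S} =>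
        (eps i f a.1 (g' b).1 : R) with hA'def
      have hM' : M.submatrix Fin.succ Fin.succ = A'.submatrix φe φe := by
        ext a b
        show A (ρ.symm a.succ) (κ.symm b.succ) = A' (φe a) (φe b)
        have h1 : g' (φe b) = χe b := by
          rw [hg'def]
          simp [Equiv.trans_apply]
        show eps i f (ρ.symm a.succ).1 (g (κ.symm b.succ)).1
          = eps i f (φe a).1 (g' (φe b)).1
        rw [h1, hφv a, hχv b]
      have hIH := IH (insert w.1 S) (T.erase e) hT'card hcard' g'
      calc A.det ^ 2 = M.det ^ 2 := hAM
        _ = (M 0 0 * M 0 0) * (M.submatrix Fin.succ Fin.succ).det ^ 2 := by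
            rw [hdM]; ring
        _ = (A'.det) ^ 2 := by
            rw [hM00, hM', Matrix.det_submatrix_equiv_self, one_mul]
        _ = if IsSpanningForest i f (insert w.1 S) (T.erase e) then 1 else 0 := hIH
        _ = if IsSpanningForest i f S T then 1 else 0 :=
            if_congr (forest_insert_iff hl hwS he hince huniq).symm rfl rfl
    · -- all degrees ≥ 2
      push_neg at hA hB
      have hC : ∀ w : {v : V // v ∉ S},
          2 ≤ (T.filter fun e => i e = w.1 ∨ f e = w.1).card := by
        intro w
        have h0 := hA w
        have h1 := hB w
        omega
      have hSle : S.card ≤ Fintype.card V := Finset.card_le_univ S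
      have hScomp : Sᶜ.card = T.card := by
        rw [Finset.card_compl]; omega
      -- every edge of T has both endpoints outside S
      have hend : ∀ e ∈ T, i e ∉ S ∧ f e ∉ S := by
        have hsub : ∀ e : E, (Sᶜ.filter fun w => i e = w ∨ f e = w) ⊆ {i e, f e} := by
          intro e w hw
          rw [Finset.mem_filter] at hw
          rcases hw.2 with h | h
          · exact Finset.mem_insert.2 (Or.inl h.symm)
          · exact Finset.mem_insert.2 (Or.inr (Finset.mem_singleton.2 h.symm))
        have hce : ∀ e ∈ T, (Sᶜ.filter fun w => i e = w ∨ f e = w).card ≤ 2 := by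
          intro e _
          refine (Finset.card_le_card (hsub e)).trans ?_
          exact (Finset.card_insert_le _ _).trans (by simp)
        have hswap : ∑ w ∈ Sᶜ, (T.filter fun e => i e = w ∨ f e = w).card
            = ∑ e ∈ T, (Sᶜ.filter fun w => i e = w ∨ f e = w).card := by
          simp only [Finset.card_filter]
          exact Finset.sum_comm
        have hsum1 : 2 * Sᶜ.card ≤ ∑ w ∈ Sᶜ, (T.filter fun e => i e = w ∨ f e = w).card := by
          have : ∀ w ∈ Sᶜ, 2 ≤ (T.filter fun e => i e = w ∨ f e = w).card := by
            intro w hw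
            exact hC ⟨w, Finset.mem_compl.1 hw⟩
          calc 2 * Sᶜ.card = ∑ _w ∈ Sᶜ, 2 := by
                rw [Finset.sum_const, smul_eq_mul, mul_comm]
            _ ≤ _ := Finset.sum_le_sum this
        have heq2 : ∀ e ∈ T, (Sᶜ.filter fun w => i e = w ∨ f e = w).card = 2 := by
          by_contra hcon
          push_neg at hcon
          obtain ⟨e₀, he₀, hne₀⟩ := hcon
          have hlt : ∑ e ∈ T, (Sᶜ.filter fun w => i e = w ∨ f e = w).card
              < ∑ _e ∈ T, 2 :=
            Finset.sum_lt_sum (fun e he => hce e he)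
              ⟨e₀, he₀, lt_of_le_of_ne (hce e₀ he₀) hne₀⟩
          rw [Finset.sum_const, smul_eq_mul] at hlt
          omega
        intro e he
        have hpair : ({i e, f e} : Finset V).card ≤ 2 :=
          (Finset.card_insert_le _ _).trans (by simp)
        have hfe : (Sᶜ.filter fun w => i e = w ∨ f e = w) = {i e, f e} :=
          Finset.eq_of_subset_of_card_le (hsub e) (by rw [heq2 e he]; exact hpair)
        constructor
        · have : i e ∈ Sᶜ.filter fun w => i e = w ∨ f e = w := by
            rw [hfe]; exact Finset.mem_insert_self _ _
          exact Finset.mem_compl.1 (Finset.mem_filter.1 this).1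
        · have : f e ∈ Sᶜ.filter fun w => i e = w ∨ f e = w := by
            rw [hfe]; exact Finset.mem_insert.2 (Or.inr (Finset.mem_singleton_self _))
          exact Finset.mem_compl.1 (Finset.mem_filter.1 this).1
      -- rows sum to zero
      set A := (Matrix.of fun a b : {v : V // v ∉ S} => (eps i f a.1 (g b).1 : R))
      have hrows : (∑ a : {v : V // v ∉ S}, A a) = 0 := by
        funext b
        simp only [Finset.sum_apply, Pi.zero_apply]
        have hT' := (g b).2
        have hends := hend (g b).1 hT'
        have hsum : ∑ a : {v : V // v ∉ S}, A a b
            = ∑ v ∈ Sᶜ, eps i f v (g b).1 := by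
          rw [← Finset.sum_coe_sort (Sᶜ) (fun v => (eps i f v (g b).1 : R))]
          apply Finset.sum_bij (fun (a : {v : V // v ∉ S}) _ =>
            (⟨a.1, Finset.mem_compl.2 a.2⟩ : {x // x ∈ Sᶜ}))
          · intro a _; exact Finset.mem_univ _
          · intro a _ a' _ h
            rw [Subtype.ext_iff] at h ⊢
            exact h
          · intro c _
            exact ⟨⟨c.1, Finset.mem_compl.1 c.2⟩, Finset.mem_univ _, rfl⟩
          · intro a _; rfl
        refine (Finset.sum_apply b Finset.univ (fun a => A a)).trans ?_
        rw [hsum]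
        have hsub2 : ({i (g b).1, f (g b).1} : Finset V) ⊆ Sᶜ := by
          intro x hx
          rcases Finset.mem_insert.1 hx with rfl | hx
          · exact Finset.mem_compl.2 hends.1
          · rw [Finset.mem_singleton.1 hx]
            exact Finset.mem_compl.2 hends.2
        rw [← Finset.sum_subset hsub2]
        · rw [Finset.sum_pair (hl (g b).1)]
          have h1 : (eps i f (i (g b).1) (g b).1 : R) = -1 := by simp [eps]
          have h2 : (eps i f (f (g b).1) (g b).1 : R) = 1 := by
            simp [eps, hl (g b).1]
          rw [h1, h2]
          ring
        · intro x _ hx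
          simp only [Finset.mem_insert, Finset.mem_singleton] at hx
          push_neg at hx
          have e1 : i (g b).1 ≠ x := fun h => hx.1 h.symm
          have e2 : f (g b).1 ≠ x := fun h => hx.2 h.symm
          simp [eps, e1, e2]
      have hWne : Nonempty {v : V // v ∉ S} := by
        rw [← Fintype.card_pos_iff, Fintype.card_congr g, Fintype.card_coe]
        omega
      obtain ⟨a₀⟩ := hWne
      have hdet : A.det = 0 := by
        have h1 : (A.updateRow a₀ (∑ k, (1 : R) • A k)).det = (1 : R) • A.det :=
          Matrix.det_updateRow_sum A a₀ (fun _ => 1)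
        simp only [one_smul] at h1
        rw [hrows] at h1
        rw [← h1]
        refine Matrix.det_eq_zero_of_row_eq_zero a₀ ?_
        intro j
        rw [Matrix.updateRow_self]
        rfl
      rw [hdet, if_neg]
      · ring
      · rintro ⟨_, hall, _⟩
        obtain ⟨s, hs, hc⟩ := hall a₀.1
        exact (connects_stay hend a₀.2 hc) hs


section LapAux
variable {V E R : Type} [Fintype V] [Fintype E] [DecidableEq V] [DecidableEq E] [CommRing R]

lemma lap_entry (i f : E → V) (hl : ∀ e : E, i e ≠ f e) (α : E → R) (v w : V) :
    Lap i f α v w = ∑ e : E, α e * eps i f v e * eps i f w e := by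
  by_cases hvw : v = w
  · subst hvw
    show (if v = v then _ else _) = _
    rw [if_pos rfl, Finset.sum_filter]
    apply Finset.sum_congr rfl
    intro e _
    by_cases h1 : i e = v <;> by_cases h2 : f e = v <;>
      simp [eps, h1, h2] <;> ring
  · show (if v = w then _ else _) = _
    rw [if_neg hvw]
    have key : ∀ e : E, α e * eps i f v e * eps i f w e
        = if (i e = v ∧ f e = w) ∨ (i e = w ∧ f e = v) then -α e else 0 := by
      intro e
      by_cases h1 : i e = v
      · have h3 : i e ≠ w := fun h => hvw (h1.symm.trans h)
        by_cases h4 : f e = w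
        · simp [eps, h1, h3, h4, hvw]
        · simp [eps, h1, h3, h4, hvw]
      · by_cases h2 : f e = v
        · have h4 : f e ≠ w := fun h => hvw (h2.symm.trans h)
          have hwv : ¬w = v := fun h => hvw h.symm
          by_cases h3 : i e = w
          · simp [eps, h1, h2, h3, h4, hwv]
          · simp [eps, h1, h2, h3, h4, hwv, hvw]
        · simp [eps, h1, h2]
    rw [Finset.sum_congr rfl fun e _ => key e]
    rw [Finset.sum_ite, Finset.sum_const_zero, add_zero, Finset.sum_neg_distrib]

end LapAux

/-- All-minors matrix-tree theorem (Fiedler): the principal minor of the weighted Laplacian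
obtained by deleting the rows and columns indexed by `S` equals the generating polynomial of
spanning forests with `|S|` trees, each containing exactly one vertex of `S`. -/
theorem allMinors_matrixTree {V E R : Type} [Fintype V] [Fintype E] [DecidableEq V]
    [DecidableEq E] [CommRing R] (i f : E → V) (hl : ∀ e : E, i e ≠ f e)
    (hconn : ∀ u v : V, Connects i f Finset.univ u v) (α : E → R) (S : Finset V) :
    ((Lap i f α).submatrix (fun a : {v : V // v ∉ S} => (a : V))
        (fun a : {v : V // v ∉ S} => (a : V))).det =
      ∑ T ∈ @Finset.filter _ (fun T => IsSpanningForest i f S T)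
          (Classical.decPred _) Finset.univ,
        ∏ e ∈ T, α e := by
  classical
  have hWcard : Fintype.card {v : V // v ∉ S} = Fintype.card V - S.card := by
    rw [Fintype.card_subtype_compl, Fintype.card_coe]
  have hSle : S.card ≤ Fintype.card V := Finset.card_le_univ S
  -- Step 1: rewrite the submatrix as a sum of rank-one rows
  have hM : (Lap i f α).submatrix (fun a : {v : V // v ∉ S} => (a : V))
      (fun a : {v : V // v ∉ S} => (a : V))
      = Matrix.of fun a : {v : V // v ∉ S} => ∑ e : E,
          (α e * eps i f a.1 e) • (fun b : {v : V // v ∉ S} => (eps i f b.1 e : R)) := by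
    ext a b
    simp only [Matrix.submatrix_apply, Matrix.of_apply, Finset.sum_apply, Pi.smul_apply,
      smul_eq_mul]
    rw [lap_entry i f hl α a.1 b.1]
  -- Step 2: expand by multilinearity
  have h1 : ((Lap i f α).submatrix (fun a : {v : V // v ∉ S} => (a : V))
      (fun a : {v : V // v ∉ S} => (a : V))).det
      = ∑ φ : {v : V // v ∉ S} → E,
        (∏ a : {v : V // v ∉ S}, (α (φ a) * eps i f a.1 (φ a)))
          * (Matrix.of fun a b : {v : V // v ∉ S} => (eps i f b.1 (φ a) : R)).det := by
    rw [hM]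
    have e1 : (Matrix.of fun a : {v : V // v ∉ S} => ∑ e : E,
        (α e * eps i f a.1 e) • (fun b : {v : V // v ∉ S} => (eps i f b.1 e : R))).det
        = (Matrix.detRowAlternating :
            ({v : V // v ∉ S} → R) [⋀^{v : V // v ∉ S}]→ₗ[R] R).toMultilinearMap
          (fun a : {v : V // v ∉ S} => ∑ e : E,
            (α e * eps i f a.1 e) • (fun b : {v : V // v ∉ S} => (eps i f b.1 e : R))) := rfl
    rw [e1, MultilinearMap.map_sum]
    apply Finset.sum_congr rfl
    intro φ _
    rw [MultilinearMap.map_smul_univ]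
    rw [smul_eq_mul]
    rfl
  rw [h1]
  -- Step 3: group by image
  rw [← Finset.sum_fiberwise_of_maps_to
    (g := fun φ : {v : V // v ∉ S} → E => Finset.image φ Finset.univ)
    (t := (Finset.univ : Finset (Finset E))) (fun φ _ => Finset.mem_univ _)]
  -- Step 4: evaluate each fiber
  have h4 : ∀ T' : Finset E,
      (∑ φ ∈ Finset.univ.filter
          (fun φ : {v : V // v ∉ S} → E => Finset.image φ Finset.univ = T'),
        (∏ a : {v : V // v ∉ S}, (α (φ a) * eps i f a.1 (φ a)))
          * (Matrix.of fun a b : {v : V // v ∉ S} => (eps i f b.1 (φ a) : R)).det)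
      = if IsSpanningForest i f S T' then ∏ e ∈ T', α e else 0 := by
    intro T'
    have h2 : ∀ φ : {v : V // v ∉ S} → E, ¬Function.Injective φ →
        (Matrix.of fun a b : {v : V // v ∉ S} => (eps i f b.1 (φ a) : R)).det = 0 := by
      intro φ hφ
      obtain ⟨a, a', hfa, hne⟩ := Function.not_injective_iff.1 hφ
      exact Matrix.det_zero_of_row_eq hne (funext fun b => by
        simp only [Matrix.of_apply, hfa])
    by_cases hTm : T'.card = Fintype.card {v : V // v ∉ S}
    · -- the main case
      have hcT' : T'.card + S.card = Fintype.card V := by omega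
      have g₀ : {v : V // v ∉ S} ≃ {e : E // e ∈ T'} :=
        Fintype.equivOfCardEq (by rw [Fintype.card_coe]; omega)
      set jmap : Equiv.Perm {v : V // v ∉ S} → ({v : V // v ∉ S} → E) :=
        fun σ a => (g₀ (σ a)).1 with hjdef
      have hjinj : ∀ σ ∈ (Finset.univ : Finset (Equiv.Perm {v : V // v ∉ S})),
          ∀ σ' ∈ (Finset.univ : Finset (Equiv.Perm {v : V // v ∉ S})),
          jmap σ = jmap σ' → σ = σ' := by
        intro σ _ σ' _ h
        ext a
        have h1 : (g₀ (σ a)).1 = (g₀ (σ' a)).1 := congrFun h a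
        have := g₀.injective (Subtype.ext h1)
        rw [this]
      have hfiber : Finset.univ.filter
          (fun φ : {v : V // v ∉ S} → E => Finset.image φ Finset.univ = T')
          = Finset.image jmap Finset.univ := by
        ext φ
        simp only [Finset.mem_filter, Finset.mem_univ, true_and, Finset.mem_image]
        constructor
        · intro hφ
          have hinj : Function.Injective φ := by
            have h5 : (Finset.image φ Finset.univ).card
                = (Finset.univ : Finset {v : V // v ∉ S}).card := by
              rw [hφ, hTm, Finset.card_univ]
            have h6 := Finset.injOn_of_card_image_eq h5
            intro a b hab
            exact h6 (Finset.mem_coe.2 (Finset.mem_univ a))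
              (Finset.mem_coe.2 (Finset.mem_univ b)) hab
          have hmem : ∀ a : {v : V // v ∉ S}, φ a ∈ T' := by
            intro a; rw [← hφ]; exact Finset.mem_image_of_mem φ (Finset.mem_univ a)
          set ψ : {v : V // v ∉ S} → {v : V // v ∉ S} :=
            fun a => g₀.symm ⟨φ a, hmem a⟩ with hψdef
          have hψinj : Function.Injective ψ := by
            intro a b hab
            have h7 : (⟨φ a, hmem a⟩ : {e : E // e ∈ T'}) = ⟨φ b, hmem b⟩ :=
              g₀.symm.injective hab
            have h8 : φ a = φ b := by
              rw [Subtype.ext_iff] at h7; exact h7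
            exact hinj h8
          have hψbij := Finite.injective_iff_bijective.1 hψinj
          refine ⟨Equiv.ofBijective ψ hψbij, funext fun a => ?_⟩
          show (g₀ (ψ a)).1 = φ a
          rw [hψdef]
          simp [Equiv.apply_symm_apply]
        · rintro ⟨σ, rfl⟩
          ext x
          simp only [Finset.mem_image, Finset.mem_univ, true_and]
          constructor
          · rintro ⟨a, rfl⟩; exact (g₀ (σ a)).2
          · intro hx
            exact ⟨σ.symm (g₀.symm ⟨x, hx⟩), by simp [hjdef]⟩
      rw [hfiber, Finset.sum_image hjinj]
      set B := Matrix.of fun a b : {v : V // v ∉ S} => (eps i f a.1 (g₀ b).1 : R)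
        with hBdef
      have hsig : ∑ σ : Equiv.Perm {v : V // v ∉ S},
          ((Equiv.Perm.sign σ : ℤ) : R) * ∏ a : {v : V // v ∉ S},
            eps i f a.1 (g₀ (σ a)).1 = B.det := by
        rw [Matrix.det_apply']
        apply Fintype.sum_equiv (Equiv.inv (Equiv.Perm {v : V // v ∉ S}))
        intro σ
        simp only [Equiv.inv_apply, Equiv.Perm.sign_inv]
        congr 1
        calc ∏ a : {v : V // v ∉ S}, eps i f a.1 (g₀ (σ a)).1
            = ∏ a : {v : V // v ∉ S}, eps i f (σ⁻¹ (σ a)).1 (g₀ (σ a)).1 := by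
              apply Finset.prod_congr rfl
              intro a _
              rw [Equiv.Perm.inv_def, Equiv.symm_apply_apply]
          _ = ∏ x : {v : V // v ∉ S}, eps i f (σ⁻¹ x).1 (g₀ x).1 :=
              Equiv.prod_comp σ (fun x => eps i f (σ⁻¹ x).1 (g₀ x).1)
          _ = ∏ x : {v : V // v ∉ S}, B (σ⁻¹ x) x := rfl
      have hterm : ∀ σ : Equiv.Perm {v : V // v ∉ S},
          (∏ a : {v : V // v ∉ S}, (α (jmap σ a) * eps i f a.1 (jmap σ a)))
            * (Matrix.of fun a b : {v : V // v ∉ S} => (eps i f b.1 (jmap σ a) : R)).det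
          = (∏ e' ∈ T', α e') * (B.det * (((Equiv.Perm.sign σ : ℤ) : R)
              * ∏ a : {v : V // v ∉ S}, eps i f a.1 (g₀ (σ a)).1)) := by
        intro σ
        have hα : ∏ a : {v : V // v ∉ S}, α (jmap σ a) = ∏ e' ∈ T', α e' := by
          calc ∏ a : {v : V // v ∉ S}, α (g₀ (σ a)).1
              = ∏ a : {v : V // v ∉ S}, α (g₀ a).1 :=
                Equiv.prod_comp σ (fun x => α (g₀ x).1)
            _ = ∏ x : {e : E // e ∈ T'}, α x.1 :=
                Equiv.prod_comp g₀ (fun x => α x.1)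
            _ = ∏ e' ∈ T', α e' := Finset.prod_coe_sort T' α
        have hdet : (Matrix.of fun a b : {v : V // v ∉ S} =>
            (eps i f b.1 (jmap σ a) : R)).det
            = ((Equiv.Perm.sign σ : ℤ) : R) * B.det := by
          have hBT : (Matrix.of fun a b : {v : V // v ∉ S} =>
              (eps i f b.1 (jmap σ a) : R)) = (B.transpose).submatrix σ id := by
            ext a b
            rfl
          rw [hBT, Matrix.det_permute, Matrix.det_transpose]
        rw [Finset.prod_mul_distrib, hα, hdet]
        ring
      calc (∑ σ : Equiv.Perm {v : V // v ∉ S},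
            (∏ a : {v : V // v ∉ S}, (α (jmap σ a) * eps i f a.1 (jmap σ a)))
              * (Matrix.of fun a b : {v : V // v ∉ S} =>
                  (eps i f b.1 (jmap σ a) : R)).det)
          = ∑ σ : Equiv.Perm {v : V // v ∉ S},
              (∏ e' ∈ T', α e') * (B.det * (((Equiv.Perm.sign σ : ℤ) : R)
                * ∏ a : {v : V // v ∉ S}, eps i f a.1 (g₀ (σ a)).1)) :=
            Finset.sum_congr rfl fun σ _ => hterm σ
        _ = (∏ e' ∈ T', α e') * (B.det * ∑ σ : Equiv.Perm {v : V // v ∉ S},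
              ((Equiv.Perm.sign σ : ℤ) : R)
                * ∏ a : {v : V // v ∉ S}, eps i f a.1 (g₀ (σ a)).1) := by
            rw [← Finset.mul_sum, ← Finset.mul_sum]
        _ = (∏ e' ∈ T', α e') * (B.det * B.det) := by rw [hsig]
        _ = (∏ e' ∈ T', α e') * B.det ^ 2 := by ring
        _ = (∏ e' ∈ T', α e')
            * (if IsSpanningForest i f S T' then 1 else 0) := by
            rw [key_det i f hl T'.card S T' rfl hcT' g₀]
        _ = if IsSpanningForest i f S T' then ∏ e' ∈ T', α e' else 0 := by
            split_ifs <;> ring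
    · -- degenerate cardinality; both sides vanish
      rw [if_neg]
      · apply Finset.sum_eq_zero
        intro φ hφ
        rw [Finset.mem_filter] at hφ
        have hni : ¬Function.Injective φ := by
          intro hinj
          exact hTm (by rw [← hφ.2, Finset.card_image_of_injective _ hinj,
            Finset.card_univ])
        rw [h2 φ hni]
        ring
      · intro hforest
        have := hforest.1
        omega
  rw [Finset.sum_congr rfl fun T' _ => h4 T', Finset.sum_filter]
end

section
/- Let G be a loopless multigraph with incidence signs ε_{v,e} ∈ {−1,0,1} coming from an orientation, and let 𝔽_q be a finite field with nontrivial additive character χ₁. Then for any k : E(G) → 𝔽_q, Σ_{x : V(G) → 𝔽_q} Π_{e ∈ E(G)} χ₁((x(i(e)) − x(f(e)))·k(e)) = Π_{v ∈ V(G)} q · δ(Σ_{e ∈ E(G)} ε_{v,e}·k(e)), where δ(0)=1 and δ(t)=0 for t ≠ 0. -/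
/-- Lemma 1: `∑_{x : V → 𝔽_q} ∏_e χ₁((x_{i(e)} - x_{f(e)}) k_e)
  = ∏_v q · δ(∑_e ε_{v,e} k_e)`. -/
theorem sum_prod_addChar_eq_prod_delta {V E F : Type} [Fintype V] [Fintype E]
    [DecidableEq V] [Field F] [Fintype F] [DecidableEq F]
    (i f : E → V) (hl : ∀ e : E, i e ≠ f e)
    (χ₁ : AddChar F ℂ) (hχ : ∃ x : F, χ₁ x ≠ 1) (k : E → F) :
    ∑ x : V → F, ∏ e : E, χ₁ ((x (i e) - x (f e)) * k e) =
      ∏ v : V, (Fintype.card F : ℂ) *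
        (if (∑ e : E, eps i f v e * k e) = 0 then 1 else 0) := by
  classical
  have hmap : ∀ {ι : Type} (s : Finset ι) (g : ι → F),
      χ₁ (∑ j ∈ s, g j) = ∏ j ∈ s, χ₁ (g j) := by
    intro ι s g
    induction s using Finset.cons_induction with
    | empty => simp
    | cons a s ha ih =>
      rw [Finset.sum_cons, Finset.prod_cons, AddChar.map_add_eq_mul, ih]
  have key : ∀ x : V → F, (∏ e : E, χ₁ ((x (i e) - x (f e)) * k e)) =
      ∏ v : V, χ₁ (x v * (-∑ e : E, eps i f v e * k e)) := by
    intro x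
    rw [← hmap, ← hmap]
    congr 1
    have heps : ∀ e : E, (x (i e) - x (f e)) * k e =
        -∑ v : V, eps i f v e * (x v * k e) := by
      intro e
      have h0 : ∀ v : V, (eps i f v e : F) * (x v * k e) =
          (if i e = v then -(x v * k e) else 0) +
          (if f e = v then (x v * k e) else 0) := by
        intro v
        simp only [eps]
        split_ifs with h1 h2
        · exact absurd (h1.trans h2.symm) (hl e)
        · ring
        · ring
        · ring
      simp only [h0, Finset.sum_add_distrib, Finset.sum_ite_eq Finset.univ,
        Finset.mem_univ, if_true]
      ring
    calc ∑ e : E, (x (i e) - x (f e)) * k e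
        = ∑ e : E, -∑ v : V, eps i f v e * (x v * k e) :=
          Finset.sum_congr rfl fun e _ => heps e
      _ = ∑ e : E, ∑ v : V, -(eps i f v e * (x v * k e)) :=
          Finset.sum_congr rfl fun e _ => (Finset.sum_neg_distrib _).symm
      _ = ∑ v : V, ∑ e : E, -(eps i f v e * (x v * k e)) := Finset.sum_comm
      _ = ∑ v : V, x v * (-∑ e : E, eps i f v e * k e) := by
          refine Finset.sum_congr rfl fun v _ => ?_
          rw [mul_neg, Finset.mul_sum, ← Finset.sum_neg_distrib]
          exact Finset.sum_congr rfl fun e _ => by ring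
  simp only [key]
  rw [← Fintype.prod_sum (fun (v : V) (y : F) =>
    χ₁ (y * (-∑ e : E, eps i f v e * k e)))]
  refine Finset.prod_congr rfl fun v _ => ?_
  have hprim : χ₁.IsPrimitive := by
    refine AddChar.IsPrimitive.of_ne_one ?_
    obtain ⟨x, hx⟩ := hχ
    exact fun h => hx (by rw [h]; rfl)
  rw [AddChar.sum_mulShift _ hprim]
  simp only [neg_eq_zero]
  split_ifs <;> simp
end

section
/- For q a power of an odd prime, q − 1 = Σ_{α₁,α₂,α₃ ∈ 𝔽_q^*} η(α₁α₂ + α₁α₃ + α₂α₃) · (g(q)/q)², where η is the quadratic character of 𝔽_q and g(q) its quadratic Gaussian sum (so (g(q)/q)² = ±1/q). -/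
open Finset

section helpers

variable {F : Type} [Field F] [Fintype F] [DecidableEq F]

private lemma sum_units_eq (f : F → ℂ) : ∑ c : Fˣ, f (c : F) = (∑ c : F, f c) - f 0 := by
  have h0 : ∑ x ∈ Finset.univ.erase (0 : F), f x + f 0 = ∑ x : F, f x :=
    Finset.sum_erase_add _ _ (Finset.mem_univ 0)
  have h1 : ∑ c : Fˣ, f (c : F) = ∑ x ∈ Finset.univ.erase (0 : F), f x :=
    Finset.sum_bij (fun (c : Fˣ) _ => (c : F))
      (fun c _ => Finset.mem_erase.mpr ⟨c.ne_zero, Finset.mem_univ _⟩)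
      (fun a _ b _ h => Units.ext h)
      (fun x hx => ⟨Units.mk0 x (Finset.mem_erase.mp hx).1, Finset.mem_univ _, rfl⟩)
      (fun c _ => rfl)
  rw [h1, ← h0]; ring

private lemma eta_cast_mul (x y : F) :
    ((quadraticChar F (x * y) : ℤ) : ℂ) =
      ((quadraticChar F x : ℤ) : ℂ) * ((quadraticChar F y : ℤ) : ℂ) := by
  rw [map_mul]; push_cast; ring

private lemma eta_sum_zero (hF : ringChar F ≠ 2) :
    ∑ x : F, ((quadraticChar F x : ℤ) : ℂ) = 0 := by
  have := quadraticChar_sum_zero hF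
  have : ((∑ x : F, quadraticChar F x : ℤ) : ℂ) = 0 := by rw [this]; norm_num
  simpa [Int.cast_sum] using this

/-- Lemma A: for `s ≠ 0`, `∑_{c : F} η(c*s + t) = 0`. -/
private lemma sum_eta_affine (hF : ringChar F ≠ 2) {s : F} (hs : s ≠ 0) (t : F) :
    ∑ c : F, ((quadraticChar F (c * s + t) : ℤ) : ℂ) = 0 := by
  have h := (Equiv.sum_comp ((Equiv.mulRight₀ s hs).trans (Equiv.addRight t))
    (fun y => ((quadraticChar F y : ℤ) : ℂ)))
  simp only [Equiv.trans_apply, Equiv.mulRight₀_apply, Equiv.coe_addRight] at h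
  rw [h, eta_sum_zero hF]

/-- Lemma B: for `s ≠ 0`, `∑_{c : Fˣ} η(c*s + t) = -η t`. -/
private lemma sum_eta_affine_units (hF : ringChar F ≠ 2) {s : F} (hs : s ≠ 0) (t : F) :
    ∑ c : Fˣ, ((quadraticChar F ((c : F) * s + t) : ℤ) : ℂ)
      = -((quadraticChar F t : ℤ) : ℂ) := by
  have h := sum_units_eq (f := fun c : F => ((quadraticChar F (c * s + t) : ℤ) : ℂ))
  rw [sum_eta_affine hF hs t] at h
  simp only [zero_mul, zero_add] at h
  rw [h, zero_sub]

end helpers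

/-- The main theorem for the triangle `K₃`:
`q - 1 = ∑_{α₁,α₂,α₃ ∈ 𝔽_q^*} η(α₁α₂ + α₁α₃ + α₂α₃) · (g(q)/q)²`. -/
theorem K3_identity {F : Type} [Field F] [Fintype F] [DecidableEq F]
    (hF : ringChar F ≠ 2) (χ₁ : AddChar F ℂ) (hχ : ∃ x : F, χ₁ x ≠ 1) :
    (Fintype.card F : ℂ) - 1 =
      ∑ a : Fˣ, ∑ b : Fˣ, ∑ c : Fˣ,
        ((quadraticChar F ((a : F) * b + (a : F) * c + (b : F) * c) : ℤ) : ℂ) *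
          ((∑ x : F, ((quadraticChar F x : ℤ) : ℂ) * χ₁ x) / (Fintype.card F : ℂ)) ^ 2 := by
  set η : F → ℂ := fun x => ((quadraticChar F x : ℤ) : ℂ) with hη
  set q : ℂ := (Fintype.card F : ℂ) with hq
  set K : ℂ := ((∑ x : F, η x * χ₁ x) / q) ^ 2 with hK
  have hq1 : (1 : ℕ) ≤ Fintype.card F := Fintype.card_pos
  have hqne : q ≠ 0 := by
    simp only [hq, Ne, Nat.cast_eq_zero]
    exact Fintype.card_pos.ne'
  have hcardu : ((Fintype.card Fˣ : ℕ) : ℂ) = q - 1 := by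
    rw [Fintype.card_units, Nat.cast_sub hq1, Nat.cast_one, hq]
  -- η of -1 squared is 1
  have hsq : ∀ x : F, x ≠ 0 → η x ^ 2 = 1 := by
    intro x hx
    have := quadraticChar_sq_one hx
    have : ((quadraticChar F x ^ 2 : ℤ) : ℂ) = 1 := by rw [this]; norm_num
    simpa [hη, pow_two] using this
  have hneg : ∀ a : Fˣ, η (-((a : F) * a)) = η (-1) := by
    intro a
    have h1 : -((a : F) * a) = (-1) * ((a : F) ^ 2) := by ring
    simp only [hη, h1, map_mul]
    have h2 := quadraticChar_sq_one' (F := F) (a := (a : F)) a.ne_zero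
    rw [h2]
    push_cast
    ring
  -- sum of η over units is 0
  have hsumη : ∑ b : Fˣ, η (b : F) = 0 := by
    rw [sum_units_eq (f := η), eta_sum_zero hF]
    simp [hη]
  -- inner sum over c
  have hinner : ∀ a b : Fˣ, (∑ c : Fˣ, η ((a : F) * b + (a : F) * c + (b : F) * c))
      = if b = -a then (q - 1) * η (-1) else -(η a * η b) := by
    intro a b
    by_cases hb : b = -a
    · rw [if_pos hb]
      have hval : ∀ c : Fˣ, (a : F) * b + (a : F) * c + (b : F) * c = -((a : F) * a) := by
        intro c
        have : (b : F) = -(a : F) := by rw [hb]; simp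
        rw [this]; ring
      calc ∑ c : Fˣ, η ((a : F) * b + (a : F) * c + (b : F) * c)
          = ∑ _c : Fˣ, η (-((a : F) * a)) := by
            exact Finset.sum_congr rfl fun c _ => by rw [hval c]
        _ = (Fintype.card Fˣ : ℂ) * η (-((a : F) * a)) := by
            rw [Finset.sum_const, nsmul_eq_mul, Finset.card_univ]
        _ = (q - 1) * η (-1) := by rw [hcardu, hneg]
    · rw [if_neg hb]
      have hs : (a : F) + (b : F) ≠ 0 := by
        intro h
        apply hb
        have : (b : F) = ((-a : Fˣ) : F) := by
          simp only [Units.val_neg]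
          linear_combination h
        exact Units.ext this
      have hval : ∀ c : Fˣ, (a : F) * b + (a : F) * c + (b : F) * c
          = (c : F) * ((a : F) + (b : F)) + (a : F) * (b : F) := by intro c; ring
      calc ∑ c : Fˣ, η ((a : F) * b + (a : F) * c + (b : F) * c)
          = ∑ c : Fˣ, η ((c : F) * ((a : F) + (b : F)) + (a : F) * (b : F)) :=
            Finset.sum_congr rfl fun c _ => by rw [hval c]
        _ = -η ((a : F) * (b : F)) := sum_eta_affine_units hF hs _
        _ = -(η a * η b) := by rw [show η ((a : F) * (b : F)) = η (a : F) * η (b : F) from eta_cast_mul _ _]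
  -- sum over b
  have houter : ∀ a : Fˣ, (∑ b : Fˣ, if b = -a then (q - 1) * η (-1) else -(η a * η b))
      = q * η (-1) := by
    intro a
    have hsplit : ∀ b : Fˣ, (if b = -a then (q - 1) * η (-1) else -(η a * η b))
        = -(η a * η b) + (if b = -a then (q - 1) * η (-1) + (η a * η b) else 0) := by
      intro b
      by_cases h : b = -a <;> simp [h]
    rw [Finset.sum_congr rfl fun b _ => hsplit b, Finset.sum_add_distrib]
    rw [Finset.sum_ite_eq' Finset.univ (-a) (fun b => (q - 1) * η (-1) + (η a * η b))]
    have h1 : ∑ b : Fˣ, -(η (a : F) * η (b : F)) = 0 := by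
      have h1' : ∑ b : Fˣ, -(η (a : F) * η (b : F)) = -(η (a : F) * ∑ b : Fˣ, η (b : F)) := by
        rw [Finset.mul_sum, ← Finset.sum_neg_distrib]
      rw [h1', hsumη, mul_zero, neg_zero]
    have h2 : η a * η ((-a : Fˣ) : F) = η (-1) := by
      have : ((-a : Fˣ) : F) = -(a : F) := Units.val_neg a
      rw [this, hη, ← eta_cast_mul]
      have : (a : F) * (-(a : F)) = -((a : F) * a) := by ring
      rw [this]
      exact hneg a
    rw [h1, if_pos (Finset.mem_univ _), h2]
    ring
  -- total triple sum
  have hS : (∑ a : Fˣ, ∑ b : Fˣ, ∑ c : Fˣ, η ((a : F) * b + (a : F) * c + (b : F) * c))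
      = (q - 1) * q * η (-1) := by
    calc (∑ a : Fˣ, ∑ b : Fˣ, ∑ c : Fˣ, η ((a : F) * b + (a : F) * c + (b : F) * c))
        = ∑ a : Fˣ, ∑ b : Fˣ, (if b = -a then (q - 1) * η (-1) else -(η a * η b)) :=
          Finset.sum_congr rfl fun a _ => Finset.sum_congr rfl fun b _ => hinner a b
      _ = ∑ _a : Fˣ, q * η (-1) := Finset.sum_congr rfl fun a _ => houter a
      _ = (q - 1) * q * η (-1) := by
          rw [Finset.sum_const, nsmul_eq_mul, Finset.card_univ, hcardu]; ring
  -- the Gauss sum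
  have hg : (∑ x : F, η x * χ₁ x) ^ 2 = η (-1) * q := by
    have hχ₁ : χ₁ ≠ 1 := AddChar.ne_one_iff.mpr hχ
    have hprim : χ₁.IsPrimitive := AddChar.IsPrimitive.of_ne_one hχ₁
    set χ : MulChar F ℂ := (quadraticChar F).ringHomComp (Int.castRingHom ℂ) with hχdef
    have hχne : χ ≠ 1 :=
      (MulChar.ringHomComp_ne_one_iff (RingHom.injective_int _)).mpr (quadraticChar_ne_one hF)
    have hχq : χ.IsQuadratic := (quadraticChar_isQuadratic F).comp _
    have hgs : (∑ x : F, η x * χ₁ x) = gaussSum χ χ₁ := by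
      unfold gaussSum
      exact Finset.sum_congr rfl fun x _ => by simp [hη, hχdef, MulChar.ringHomComp_apply]
    rw [hgs, gaussSum_sq hχne hχq hprim]
    simp [hχdef, hη, MulChar.ringHomComp_apply, hq]
  -- put it together
  have hrhs : (∑ a : Fˣ, ∑ b : Fˣ, ∑ c : Fˣ,
      η ((a : F) * b + (a : F) * c + (b : F) * c) * K)
      = ((q - 1) * q * η (-1)) * K := by
    simp_rw [← Finset.sum_mul]
    rw [hS]
  rw [hrhs, hK, div_pow, hg]
  have hη2 : η (-1) * η (-1) = 1 := by
    have := hsq (-1) (neg_ne_zero.mpr one_ne_zero)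
    linear_combination this
  rw [div_eq_mul_inv]
  have : (q - 1) * q * η (-1) * (η (-1) * q * (q ^ 2)⁻¹) =
      (q - 1) * (η (-1) * η (-1)) * (q * q * (q ^ 2)⁻¹) := by ring
  rw [this, hη2, ← pow_two, mul_inv_cancel₀ (pow_ne_zero 2 hqne)]
  ring
end

section
/- Let p be a prime and B an n×n integer matrix whose reduction modulo p has rank r over 𝔽_p. Then for every i with 0 ≤ i ≤ n − r, the determinant of every (r+i)×(r+i) submatrix of B (as an integer) is divisible by p^i. -/
open Matrix Finset Submodule

/-- determinant is additive over a finite sum in one column -/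
lemma det_updateColumn_finset_sum {R : Type*} [CommRing R] {n : Type*} [DecidableEq n] [Fintype n]
    (A : Matrix n n R) (j : n) {ι : Type*} (s : Finset ι) (f : ι → n → R) :
    (A.updateCol j (∑ i ∈ s, f i)).det = ∑ i ∈ s, (A.updateCol j (f i)).det := by
  classical
  induction s using Finset.induction_on with
  | empty =>
      simp only [Finset.sum_empty]
      apply Matrix.det_eq_zero_of_column_eq_zero j
      intro x; simp [Matrix.updateCol_self]
  | insert _ _ hj ih =>
      rw [Finset.sum_insert hj, Matrix.det_updateCol_add, ih, Finset.sum_insert hj]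

lemma key_dvd (p : ℕ) [Fact p.Prime] {m : ℕ} (A : Matrix (Fin m) (Fin m) ℤ) (s : ℕ)
    (hs : (A.map (Int.cast : ℤ → ZMod p)).rank ≤ s) : (p : ℤ) ^ (m - s) ∣ A.det := by
  classical
  rcases Nat.eq_zero_or_pos m with hm | hm
  · subst hm; simp
  have : NeZero m := ⟨hm.ne'⟩
  have : Nonempty (Fin m) := ⟨⟨0, hm⟩⟩
  set A' := A.map (Int.cast : ℤ → ZMod p) with hA'
  set c : Fin m → (Fin m → ZMod p) := A'ᵀ with hc
  obtain ⟨b, hbsub, hbspan, hbind⟩ := exists_linearIndependent (ZMod p) (Set.range c)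
  have hbfin : b.Finite := Set.toFinite b
  haveI : Fintype b := hbfin.fintype
  set g : (Fin m → ZMod p) → Fin m := Function.invFun c with hg
  set J : Finset (Fin m) := b.toFinset.image g with hJ
  have hbJ : b ⊆ c '' ↑J := by
    intro v hv
    refine ⟨g v, ?_, Function.invFun_eq (hbsub hv)⟩
    simp [hJ, Set.mem_toFinset]
    exact ⟨v, hv, rfl⟩
  have hJcard : J.card ≤ s := by
    calc J.card ≤ b.toFinset.card := Finset.card_image_le
    _ = Module.finrank (ZMod p) (span (ZMod p) b) := (finrank_span_set_eq_card hbind).symm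
    _ = Module.finrank (ZMod p) (span (ZMod p) (Set.range c)) := by rw [hbspan]
    _ = A'.rank := (A'.rank_eq_finrank_span_cols).symm
    _ ≤ s := hs
  have hspan : ∀ j : Fin m, ∃ a : {x // x ∈ J} → ZMod p,
      ∑ k : {x // x ∈ J}, a k • c ↑k = c j := by
    intro j
    have h1 : c j ∈ span (ZMod p) (Set.range fun k : {x // x ∈ J} => c ↑k) := by
      have : c j ∈ span (ZMod p) (Set.range c) := subset_span ⟨j, rfl⟩
      rw [← hbspan] at this
      have h2 : span (ZMod p) b ≤ span (ZMod p) (c '' ↑J) := span_mono hbJ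
      have h3 : (c '' ↑J) = Set.range fun k : {x // x ∈ J} => c ↑k := by
        ext v; simp [Set.mem_image]
      rw [h3] at h2
      exact h2 this
    rwa [mem_span_range_iff_exists_fun (ZMod p)] at h1
  choose a ha using hspan
  set z : Fin m → {x // x ∈ J} → ℤ := fun j k => ((a j k).val : ℤ) with hz
  -- the integer column differences
  set u : Fin m → Fin m → ℤ :=
    fun j x => A x j - ∑ k : {x // x ∈ J}, z j k * A x ↑k with hu
  have hdvd : ∀ j x, (p : ℤ) ∣ u j x := by
    intro j x
    rw [← ZMod.intCast_zmod_eq_zero_iff_dvd]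
    have hcast : ((u j x : ℤ) : ZMod p)
        = c j x - ∑ k : {x // x ∈ J}, a j k * c ↑k x := by
      simp only [hu, hz]
      push_cast
      simp only [hc, hA', Matrix.transpose_apply, Matrix.map_apply]
      congr 1
      refine Finset.sum_congr rfl fun k _ => ?_
      congr 1
      simp [ZMod.natCast_val, ZMod.cast_id]
    rw [hcast]
    have := congrFun (ha j) x
    simp only [Finset.sum_apply, Pi.smul_apply, smul_eq_mul] at this
    rw [this]; ring
  set v : Fin m → Fin m → ℤ := fun j x => u j x / p with hv
  have hpv : ∀ j x, (p : ℤ) * v j x = u j x := fun j x => Int.mul_ediv_cancel' (hdvd j x)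
  set M : Finset (Fin m) → Matrix (Fin m) (Fin m) ℤ :=
    fun T => Matrix.of fun x j => if j ∈ T then v j x else A x j with hM
  have main : ∀ T : Finset (Fin m), Disjoint T J → A.det = (p : ℤ) ^ T.card * (M T).det := by
    intro T
    induction T using Finset.induction_on with
    | empty => intro _; simp only [Finset.card_empty, pow_zero, one_mul, hM, Finset.notMem_empty, if_false]; rfl
    | @insert j T hjT ih =>
        intro hdisj
        have hdisjT : Disjoint T J := (Finset.disjoint_insert_left.mp hdisj).2
        have hjJ : j ∉ J := (Finset.disjoint_insert_left.mp hdisj).1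
        rw [ih hdisjT]
        have colj : (fun x => (M T) x j) = fun x => A x j := by
          funext x; simp [hM, hjT]
        have step : (M T).det = (p : ℤ) * (M (insert j T)).det := by
          have hcolJ : ∀ (k : {x // x ∈ J}) x, (M T) x ↑k = A x ↑k := by
            intro k x
            have : (k : Fin m) ∉ T := fun h => (Finset.disjoint_left.mp hdisjT h) k.2
            simp [hM, this]
          have expand : (fun x => A x j)
              = (p : ℤ) • v j + ∑ k : {x // x ∈ J}, z j k • (fun x => A x ↑k) := by
            funext x
            simp only [Pi.add_apply, Pi.smul_apply, Finset.sum_apply, smul_eq_mul]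
            have h1 := hpv j x
            simp only [hu] at h1
            linarith
          calc (M T).det = ((M T).updateCol j (fun x => (M T) x j)).det := by
                  rw [Matrix.updateCol_eq_self]
            _ = ((M T).updateCol j ((p : ℤ) • v j
                  + ∑ k : {x // x ∈ J}, z j k • (fun x => A x ↑k))).det := by
                  rw [colj, expand]
            _ = (p : ℤ) * ((M T).updateCol j (v j)).det := by
                  rw [Matrix.det_updateCol_add, Matrix.det_updateCol_smul,
                    det_updateColumn_finset_sum]
                  have hz0 : ∀ k : {x // x ∈ J},
                      ((M T).updateCol j (z j k • fun x => A x ↑k)).det = 0 := by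
                    intro k
                    rw [Matrix.det_updateCol_smul]
                    have hjk : j ≠ (k : Fin m) := fun h => hjJ (h ▸ k.2)
                    have : ((M T).updateCol j fun x => A x ↑k).det = 0 := by
                      apply Matrix.det_zero_of_column_eq hjk
                      intro x
                      rw [Matrix.updateCol_self, Matrix.updateCol_ne (Ne.symm hjk)]
                      exact (hcolJ k x).symm
                    rw [this, mul_zero]
                  rw [Finset.sum_congr rfl fun k _ => hz0 k]
                  simp
            _ = (p : ℤ) * (M (insert j T)).det := by
                  congr 1
                  congr 1
                  ext x j'
                  by_cases h : j' = j
                  · subst h; simp [Matrix.updateCol_self, hM]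
                  · simp [Matrix.updateCol_ne h, hM, Finset.mem_insert, h]
        rw [step, Finset.card_insert_of_notMem hjT]
        ring
  have hfinal := main Jᶜ (disjoint_compl_left)
  have hcard : Jᶜ.card = m - J.card := by
    rw [Finset.card_compl, Fintype.card_fin]
  rw [hfinal, hcard]
  exact Dvd.dvd.mul_right (pow_dvd_pow _ (by omega)) _

lemma rank_submatrix_le' {R : Type*} [Field R] {m n : ℕ} (A : Matrix (Fin m) (Fin m) R)
    (f : Fin n → Fin m) (g : Fin n → Fin m) :
    (A.submatrix f g).rank ≤ A.rank := by
  classical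
  rw [Matrix.rank_eq_finrank_span_cols, Matrix.rank_eq_finrank_span_cols]
  have hsub : Set.range (A.submatrix f g)ᵀ ⊆
      (LinearMap.funLeft R R f) '' (Set.range Aᵀ) := by
    rintro _ ⟨y, rfl⟩
    exact ⟨Aᵀ (g y), ⟨g y, rfl⟩, rfl⟩
  calc Module.finrank R (span R (Set.range (A.submatrix f g)ᵀ))
      ≤ Module.finrank R (span R ((LinearMap.funLeft R R f) '' (Set.range Aᵀ))) :=
        Submodule.finrank_mono (span_mono hsub)
    _ = Module.finrank R (Submodule.map (LinearMap.funLeft R R f) (span R (Set.range Aᵀ))) := by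
        rw [Submodule.span_image]
    _ ≤ Module.finrank R (span R (Set.range Aᵀ)) := Submodule.finrank_map_le _ _

/-- If an integer matrix has rank `r` modulo a prime `p`, then the determinant of every
`(r+i) × (r+i)` submatrix is divisible by `p^i`. -/
theorem pow_prime_dvd_det_submatrix (p : ℕ) [Fact p.Prime] {n : ℕ}
    (B : Matrix (Fin n) (Fin n) ℤ) (r : ℕ)
    (hr : (B.map (Int.cast : ℤ → ZMod p)).rank = r)
    (i : ℕ) (hi : i ≤ n - r)
    (rows cols : Fin (r + i) → Fin n)
    (hrows : Function.Injective rows) (hcols : Function.Injective cols) :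
    (p : ℤ) ^ i ∣ (B.submatrix rows cols).det := by
  have hA : ((B.submatrix rows cols).map (Int.cast : ℤ → ZMod p))
      = (B.map (Int.cast : ℤ → ZMod p)).submatrix rows cols := rfl
  have hrank : ((B.submatrix rows cols).map (Int.cast : ℤ → ZMod p)).rank ≤ r := by
    rw [hA]
    exact le_trans (rank_submatrix_le' _ rows cols) (le_of_eq hr)
  have h := key_dvd p (B.submatrix rows cols) r hrank
  rwa [Nat.add_sub_cancel_left] at h
end
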